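/- arXiv:1104.3112 — 7 statements merged into one kernel-verified Lean document; each statement's English description precedes it below -/
import Mathlib

section
/- Let σ ≥ 1 and p_1 ≥ p_2 ≥ ⋯ ≥ p_σ ≥ 1 be integers, set n = (2p_1−1)+⋯+(2p_σ−1), and for j ≥ 1 let f_j = #{r ∈ {1,…,σ} : 2p_r − 1 ≥ j}. Let inv(z_{p_*}) = #{(i,j) : 1 ≤ i < j ≤ n, z_{p_*}(i) > z_{p_*}(j)} be the number of inversions of the permutation z_{p_*}. Then 2 · inv(z_{p_*}) = Σ_{j≥1} f_j² − 2 · Σ_{j≥1, j odd} f_j + n. (This is the computational content of Theorem 1.14 of the paper in the twisted GL_n case, proved in §5.10: the length of the Weyl group element z_{p_*} equals the dimension of the centralizer of the associated unipotent element.) -/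
open Finset

private lemma sum_Icc_one_succ {M : Type*} [AddCommMonoid M] (m : ℕ) (g : ℕ → M) :
    ∑ k ∈ Finset.Icc 1 (m + 1), g k = g 1 + ∑ k ∈ Finset.Icc 1 m, g (k + 1) := by
  have h1 : Finset.Icc 1 (m + 1) = insert 1 (Finset.Icc 2 (m + 1)) := by
    ext a; simp [Finset.mem_Icc, Finset.mem_insert]; omega
  have h2 : Finset.Icc 2 (m + 1) = (Finset.Icc 1 m).map (addRightEmbedding 1) := by
    rw [Finset.map_add_right_Icc]
  rw [h1, Finset.sum_insert (by simp), h2, Finset.sum_map]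
  rfl

private lemma card_filter_Icc_succ (m : ℕ) (q : ℕ → Prop) [DecidablePred q] :
    ((Finset.Icc 1 (m + 1)).filter q).card
      = (if q 1 then 1 else 0) + ((Finset.Icc 1 m).filter (fun r => q (r + 1))).card := by
  rw [Finset.card_filter, Finset.card_filter, sum_Icc_one_succ]

private lemma card_filter_odd (q : ℕ) :
    ((Finset.Icc 1 (2 * q - 1)).filter (fun j => Odd j)).card = q := by
  have h : (Finset.Icc 1 (2 * q - 1)).filter (fun j => Odd j)
      = (Finset.range q).image (fun t => 2 * t + 1) := by
    ext a
    simp only [Finset.mem_filter, Finset.mem_Icc, Finset.mem_image, Finset.mem_range,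
      Nat.odd_iff]
    constructor
    · rintro ⟨⟨h1, h2⟩, h3⟩; exact ⟨a / 2, by omega, by omega⟩
    · rintro ⟨t, ht, rfl⟩; omega
  rw [h, Finset.card_image_of_injective _ (fun a b h => by omega), Finset.card_range]

private lemma zp_aux : ∀ (σ : ℕ), ∀ (n : ℕ) (p : ℕ → ℕ) (z : Equiv.Perm ℕ),
    (∀ r, 1 ≤ r → r ≤ σ → 1 ≤ p r) →
    (∀ r, 1 ≤ r → r < σ → p (r + 1) ≤ p r) →
    (n = ∑ r ∈ Finset.Icc 1 σ, (2 * p r - 1)) →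
    (∀ r ∈ Finset.Icc 1 σ, ∀ i ∈ Finset.Icc 1 (p r - 1),
      z ((∑ k ∈ Finset.Icc 1 (r - 1), (p k - 1)) + i) =
        (∑ k ∈ Finset.Icc 1 (r - 1), p k) + i + 1) →
    (∀ r ∈ Finset.Icc 1 σ,
      z (n - ((∑ k ∈ Finset.Icc 1 (r - 1), p k) + p r - 1)) =
        (∑ k ∈ Finset.Icc 1 (r - 1), p k) + 1) →
    (∀ r ∈ Finset.Icc 1 σ, ∀ i ∈ Finset.range (p r - 1),
      z (n - ((∑ k ∈ Finset.Icc 1 (r - 1), p k) + i)) =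
        n - ((∑ k ∈ Finset.Icc 1 (r - 1), (p k - 1)) + i)) →
    (∀ m, m = 0 ∨ n < m → z m = m) →
    2 * ((((Finset.Icc 1 n) ×ˢ (Finset.Icc 1 n)).filter
        (fun ij => ij.1 < ij.2 ∧ z ij.2 < z ij.1)).card : ℤ) =
      (∑ j ∈ Finset.Icc 1 n,
          (((Finset.Icc 1 σ).filter (fun r => j ≤ 2 * p r - 1)).card : ℤ) ^ 2)
        - 2 * (∑ j ∈ (Finset.Icc 1 n).filter (fun j => Odd j),
            (((Finset.Icc 1 σ).filter (fun r => j ≤ 2 * p r - 1)).card : ℤ))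
        + (n : ℤ) := by
  intro σ
  induction σ with
  | zero =>
    intro n p z hp1 hmono hn hz1 hz2 hz3 hz0
    have hn0 : n = 0 := by simpa using hn
    subst hn0
    simp
  | succ σ ih =>
    intro n p z hp1 hmono hn hz1 hz2 hz3 hz0
    have hp1pos : 1 ≤ p 1 := hp1 1 le_rfl (by omega)
    set p1 := p 1 with hp1def
    -- n = (2 p1 - 1) + n'
    have hnsplit : n = (2 * p1 - 1) + ∑ r ∈ Finset.Icc 1 σ, (2 * p (r + 1) - 1) := by
      rw [hn, sum_Icc_one_succ]
    set n' : ℕ := ∑ r ∈ Finset.Icc 1 σ, (2 * p (r + 1) - 1) with hn'def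
    -- A facts
    have A1 : ∀ i, 1 ≤ i → i ≤ p1 - 1 → z i = i + 1 := by
      intro i h1 h2
      have := hz1 1 (by simp) i (Finset.mem_Icc.2 ⟨h1, h2⟩)
      simpa using this
    have A2 : z (n - (p1 - 1)) = 1 := by
      have := hz2 1 (by simp)
      simpa using this
    have A3 : ∀ i, i < p1 - 1 → z (n - i) = n - i := by
      intro i hi
      have := hz3 1 (by simp) i (Finset.mem_range.2 hi)
      simpa using this
    have A4 : z 0 = 0 := hz0 0 (Or.inl rfl)
    have Afix : ∀ m, n < m → z m = m := fun m hm => hz0 m (Or.inr hm)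
    have A5 : ∀ x, 1 ≤ x → x ≤ n → 1 ≤ z x ∧ z x ≤ n := by
      intro x h1 h2
      constructor
      · rcases Nat.eq_zero_or_pos (z x) with h | h
        · exfalso; have := z.injective (h.trans A4.symm); omega
        · exact h
      · by_contra h
        push_neg at h
        have := z.injective ((Afix (z x) h).symm : z x = z (z x)).symm
        omega
    have hple : p1 ≤ n := by omega
    -- the middle interval maps into the middle value interval
    have A6 : ∀ x, p1 ≤ x → x ≤ n - p1 → p1 + 1 ≤ z x ∧ z x ≤ n - p1 + 1 := by
      intro x hx1 hx2
      obtain ⟨hz1x, hz2x⟩ := A5 x (by omega) (by omega)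
      constructor
      · by_contra h
        push_neg at h
        rcases Nat.lt_or_ge 1 (z x) with h1 | h1
        · -- 2 ≤ z x ≤ p1
          have h2 : z x - 1 ≤ p1 - 1 := by omega
          have h3 := A1 (z x - 1) (by omega) h2
          have h4 : z (z x - 1) = z x := by omega
          have := z.injective h4
          omega
        · -- z x = 1
          have h5 : z x = 1 := by omega
          have := z.injective (h5.trans A2.symm)
          omega
      · by_contra h
        push_neg at h
        -- z x ≥ n - p1 + 2
        have h1 : n - z x < p1 - 1 := by omega
        have h2 := A3 (n - z x) h1
        have h3 : n - (n - z x) = z x := by omega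
        rw [h3] at h2
        have := z.injective h2
        omega
    have A7 : ∀ y, p1 + 1 ≤ y → y ≤ n - p1 + 1 → ∃ x, p1 ≤ x ∧ x ≤ n - p1 ∧ z x = y := by
      intro y hy1 hy2
      set x := z.symm y with hx
      have hzx : z x = y := z.apply_symm_apply y
      have hlow : p1 ≤ x := by
        by_contra hc
        push_neg at hc
        rcases Nat.eq_zero_or_pos x with h0 | h0
        · rw [h0, A4] at hzx; omega
        · have := A1 x h0 (by omega); omega
      have hhigh : x ≤ n - p1 := by
        by_contra hc
        push_neg at hc
        rcases Nat.lt_or_ge n x with hbig | hsmall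
        · rw [Afix x hbig] at hzx; omega
        · rcases Nat.eq_or_lt_of_le (show n - x ≤ p1 - 1 by omega) with he | hlt
          · have hx2 : x = n - (p1 - 1) := by omega
            rw [hx2, A2] at hzx; omega
          · have h2 := A3 (n - x) hlt
            have h3 : n - (n - x) = x := by omega
            rw [h3] at h2
            rw [h2] at hzx
            omega
      exact ⟨x, hlow, hhigh, hzx⟩
    -- Piece B : shifted permutation
    set d : ℕ → ℕ := fun x => if 1 ≤ x ∧ x ≤ n' then z (x + (p1 - 1)) - p1 else x with hd
    have hd_mid : ∀ x, 1 ≤ x → x ≤ n' →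
        1 ≤ d x ∧ d x ≤ n' ∧ z (x + (p1 - 1)) = d x + p1 := by
      intro x h1 h2
      have hx : p1 ≤ x + (p1 - 1) := by omega
      have hx2 : x + (p1 - 1) ≤ n - p1 := by omega
      obtain ⟨hl, hr⟩ := A6 _ hx hx2
      have hdx : d x = z (x + (p1 - 1)) - p1 := by rw [hd]; simp [h1, h2]
      refine ⟨by omega, by omega, by omega⟩
    have hd_out : ∀ x, ¬ (1 ≤ x ∧ x ≤ n') → d x = x := by
      intro x hx; rw [hd]; simp only; rw [if_neg hx]
    have hd_inj : Function.Injective d := by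
      intro a b hab
      by_cases ha : 1 ≤ a ∧ a ≤ n' <;> by_cases hb : 1 ≤ b ∧ b ≤ n'
      · obtain ⟨ha1, ha2, ha3⟩ := hd_mid a ha.1 ha.2
        obtain ⟨hb1, hb2, hb3⟩ := hd_mid b hb.1 hb.2
        have : z (a + (p1 - 1)) = z (b + (p1 - 1)) := by omega
        have := z.injective this
        omega
      · obtain ⟨ha1, ha2, _⟩ := hd_mid a ha.1 ha.2
        rw [hd_out b hb] at hab; omega
      · obtain ⟨hb1, hb2, _⟩ := hd_mid b hb.1 hb.2
        rw [hd_out a ha] at hab; omega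
      · rw [hd_out a ha, hd_out b hb] at hab; exact hab
    have hd_surj : Function.Surjective d := by
      intro y
      by_cases hy : 1 ≤ y ∧ y ≤ n'
      · obtain ⟨x, hx1, hx2, hx3⟩ := A7 (y + p1) (by omega) (by omega)
        refine ⟨x - (p1 - 1), ?_⟩
        have hc : 1 ≤ x - (p1 - 1) ∧ x - (p1 - 1) ≤ n' := by omega
        obtain ⟨h1, h2, h3⟩ := hd_mid _ hc.1 hc.2
        have hxx : x - (p1 - 1) + (p1 - 1) = x := by omega
        rw [hxx] at h3
        omega
      · exact ⟨y, hd_out y hy⟩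
    set z' : Equiv.Perm ℕ := Equiv.ofBijective d ⟨hd_inj, hd_surj⟩ with hz'
    have hz'app : ∀ x, z' x = d x := fun x => rfl
    -- Piece C : sum bookkeeping
    have hsplit1 : ∀ (g : ℕ → ℕ) r, 1 ≤ r →
        ∑ k ∈ Finset.Icc 1 r, g k = g 1 + ∑ k ∈ Finset.Icc 1 (r - 1), g (k + 1) := by
      intro g r hr
      obtain ⟨m, rfl⟩ : ∃ m, r = m + 1 := ⟨r - 1, by omega⟩
      rw [sum_Icc_one_succ]
      simp
    have hsplittop : ∀ (g : ℕ → ℕ) r, 1 ≤ r →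
        ∑ k ∈ Finset.Icc 1 r, g k = (∑ k ∈ Finset.Icc 1 (r - 1), g k) + g r := by
      intro g r hr
      obtain ⟨m, rfl⟩ : ∃ m, r = m + 1 := ⟨r - 1, by omega⟩
      rw [Finset.sum_Icc_succ_top (by omega)]
      simp
    have hQP : ∀ t, t ≤ σ →
        (∑ k ∈ Finset.Icc 1 t, (p (k + 1) - 1)) + t = ∑ k ∈ Finset.Icc 1 t, p (k + 1) := by
      intro t ht
      have h1 : ∑ k ∈ Finset.Icc 1 t, p (k + 1) = ∑ k ∈ Finset.Icc 1 t, ((p (k + 1) - 1) + 1) :=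
        Finset.sum_congr rfl (fun k hk => by
          have hk' := Finset.mem_Icc.1 hk
          have := hp1 (k + 1) (by omega) (by omega)
          omega)
      rw [h1, Finset.sum_add_distrib]
      simp [Nat.card_Icc]
    have h2S : ∀ t, t ≤ σ →
        (∑ k ∈ Finset.Icc 1 t, (2 * p (k + 1) - 1)) + t = 2 * ∑ k ∈ Finset.Icc 1 t, p (k + 1) := by
      intro t ht
      have h1 : ∑ k ∈ Finset.Icc 1 t, 2 * p (k + 1)
          = ∑ k ∈ Finset.Icc 1 t, ((2 * p (k + 1) - 1) + 1) :=
        Finset.sum_congr rfl (fun k hk => by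
          have hk' := Finset.mem_Icc.1 hk
          have := hp1 (k + 1) (by omega) (by omega)
          omega)
      rw [Finset.mul_sum, h1, Finset.sum_add_distrib]
      simp [Nat.card_Icc]
    have hPmono : ∀ t, t ≤ σ →
        ∑ k ∈ Finset.Icc 1 t, p (k + 1) ≤ ∑ k ∈ Finset.Icc 1 σ, p (k + 1) :=
      fun t ht => Finset.sum_le_sum_of_subset (Finset.Icc_subset_Icc_right ht)
    -- the hypotheses for the shifted data
    have hz1' : ∀ r ∈ Finset.Icc 1 σ, ∀ i ∈ Finset.Icc 1 (p (r + 1) - 1),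
        z' ((∑ k ∈ Finset.Icc 1 (r - 1), (p (k + 1) - 1)) + i)
          = (∑ k ∈ Finset.Icc 1 (r - 1), p (k + 1)) + i + 1 := by
      intro r hr i hi
      obtain ⟨hr1, hr2⟩ := Finset.mem_Icc.1 hr
      obtain ⟨hi1, hi2⟩ := Finset.mem_Icc.1 hi
      have e1 := hsplit1 (fun k => p k - 1) r hr1
      have e2 := hsplit1 p r hr1
      have t1 := hsplittop (fun k => p (k + 1) - 1) r hr1
      have t2 := hsplittop (fun k => p (k + 1)) r hr1
      beta_reduce at e1 e2 t1 t2
      have b1 := hQP r hr2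
      have b2 := hQP σ le_rfl
      have b3 := h2S σ le_rfl
      have b4 := hPmono r hr2
      have hQble : (∑ k ∈ Finset.Icc 1 (r - 1), (p (k + 1) - 1)) + i ≤ n' := by omega
      obtain ⟨hd1, hd2, hd3⟩ :=
        hd_mid ((∑ k ∈ Finset.Icc 1 (r - 1), (p (k + 1) - 1)) + i) (by omega) hQble
      rw [hz'app]
      have harg : (∑ k ∈ Finset.Icc 1 (r - 1), (p (k + 1) - 1)) + i + (p1 - 1)
          = (∑ k ∈ Finset.Icc 1 r, (p k - 1)) + i := by omega
      have hz := hz1 (r + 1) (Finset.mem_Icc.2 ⟨by omega, by omega⟩) i (by simpa using hi)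
      simp only [Nat.add_sub_cancel] at hz
      rw [harg, hz] at hd3
      omega
    have hz2' : ∀ r ∈ Finset.Icc 1 σ,
        z' (n' - ((∑ k ∈ Finset.Icc 1 (r - 1), p (k + 1)) + p (r + 1) - 1))
          = (∑ k ∈ Finset.Icc 1 (r - 1), p (k + 1)) + 1 := by
      intro r hr
      obtain ⟨hr1, hr2⟩ := Finset.mem_Icc.1 hr
      have e2 := hsplit1 p r hr1
      have t2 := hsplittop (fun k => p (k + 1)) r hr1
      beta_reduce at e2 t2
      have b1 := hQP r hr2
      have b2 := hQP σ le_rfl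
      have b3 := h2S σ le_rfl
      have b4 := hPmono r hr2
      have hpr := hp1 (r + 1) (by omega) (by omega)
      have hPn : (∑ k ∈ Finset.Icc 1 (r - 1), p (k + 1)) + p (r + 1) ≤ n' := by omega
      set x := n' - ((∑ k ∈ Finset.Icc 1 (r - 1), p (k + 1)) + p (r + 1) - 1) with hxdef
      have hx1 : 1 ≤ x := by omega
      have hx2 : x ≤ n' := by omega
      obtain ⟨hd1, hd2, hd3⟩ := hd_mid x hx1 hx2
      have harg : x + (p1 - 1) = n - ((∑ k ∈ Finset.Icc 1 r, p k) + p (r + 1) - 1) := by omega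
      have hz := hz2 (r + 1) (Finset.mem_Icc.2 ⟨by omega, by omega⟩)
      simp only [Nat.add_sub_cancel] at hz
      rw [hz'app]
      rw [harg, hz] at hd3
      omega
    have hz3' : ∀ r ∈ Finset.Icc 1 σ, ∀ i ∈ Finset.range (p (r + 1) - 1),
        z' (n' - ((∑ k ∈ Finset.Icc 1 (r - 1), p (k + 1)) + i))
          = n' - ((∑ k ∈ Finset.Icc 1 (r - 1), (p (k + 1) - 1)) + i) := by
      intro r hr i hi
      obtain ⟨hr1, hr2⟩ := Finset.mem_Icc.1 hr
      have hi2 := Finset.mem_range.1 hi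
      have e1 := hsplit1 (fun k => p k - 1) r hr1
      have e2 := hsplit1 p r hr1
      have t1 := hsplittop (fun k => p (k + 1) - 1) r hr1
      have t2 := hsplittop (fun k => p (k + 1)) r hr1
      beta_reduce at e1 e2 t1 t2
      have b1 := hQP r hr2
      have b2 := hQP σ le_rfl
      have b3 := h2S σ le_rfl
      have b4 := hPmono r hr2
      have hpr := hp1 (r + 1) (by omega) (by omega)
      have hPn : (∑ k ∈ Finset.Icc 1 (r - 1), p (k + 1)) + p (r + 1) ≤ n' := by omega
      set x := n' - ((∑ k ∈ Finset.Icc 1 (r - 1), p (k + 1)) + i) with hxdef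
      have hx1 : 1 ≤ x := by omega
      have hx2 : x ≤ n' := by omega
      obtain ⟨hd1, hd2, hd3⟩ := hd_mid x hx1 hx2
      have harg : x + (p1 - 1) = n - ((∑ k ∈ Finset.Icc 1 r, p k) + i) := by omega
      have hz := hz3 (r + 1) (Finset.mem_Icc.2 ⟨by omega, by omega⟩) i (by simpa using hi)
      simp only [Nat.add_sub_cancel] at hz
      rw [hz'app]
      rw [harg, hz] at hd3
      omega
    have hz0' : ∀ m, m = 0 ∨ n' < m → z' m = m := by
      intro m hm
      rw [hz'app]
      exact hd_out m (by omega)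
    -- Piece D : inversion counting
    have master : ∀ x, 1 ≤ x → x ≤ n →
        (x ≤ p1 - 1 ∧ z x = x + 1) ∨ (p1 ≤ x ∧ x ≤ n - p1 ∧ p1 + 1 ≤ z x ∧ z x ≤ n - p1 + 1)
        ∨ (x = n - p1 + 1 ∧ z x = 1) ∨ (n - p1 + 2 ≤ x ∧ z x = x) := by
      intro x h1 h2
      rcases Nat.lt_or_ge x p1 with hF | h
      · exact Or.inl ⟨by omega, A1 x h1 (by omega)⟩
      rcases le_or_gt x (n - p1) with hM | h'
      · exact Or.inr (Or.inl ⟨h, hM, A6 x h hM⟩)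
      rcases eq_or_lt_of_le (show n - p1 + 1 ≤ x by omega) with hs | ht
      · refine Or.inr (Or.inr (Or.inl ⟨hs.symm, ?_⟩))
        rw [show x = n - (p1 - 1) by omega]
        exact A2
      · refine Or.inr (Or.inr (Or.inr ⟨by omega, ?_⟩))
        have h3 : n - x < p1 - 1 := by omega
        have h4 := A3 (n - x) h3
        rwa [show n - (n - x) = x by omega] at h4
    have hA2' : z (n - p1 + 1) = 1 := by
      rw [show n - p1 + 1 = n - (p1 - 1) by omega]
      exact A2
    have hset :
        ((Finset.Icc 1 n ×ˢ Finset.Icc 1 n).filter (fun ij => ij.1 < ij.2 ∧ z ij.2 < z ij.1))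
          = ((Finset.Icc 1 (n - p1)).image (fun i => (i, n - p1 + 1)))
            ∪ (((Finset.Icc 1 n' ×ˢ Finset.Icc 1 n').filter
                (fun ij => ij.1 < ij.2 ∧ z' ij.2 < z' ij.1)).image
                  (fun ij => (ij.1 + (p1 - 1), ij.2 + (p1 - 1)))) := by
      ext ⟨i, j⟩
      simp only [Finset.mem_filter, Finset.mem_product, Finset.mem_union, Finset.mem_image,
        Finset.mem_Icc, Prod.mk.injEq, Prod.exists]
      constructor
      · rintro ⟨⟨⟨hi1, hi2⟩, hj1, hj2⟩, hij, hzz⟩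
        by_cases hj : j = n - p1 + 1
        · exact Or.inl ⟨i, ⟨hi1, by omega⟩, rfl, hj.symm⟩
        · right
          rcases master i hi1 hi2 with hi' | hi' | hi' | hi' <;>
            rcases master j hj1 hj2 with hj' | hj' | hj' | hj'
          · exfalso; omega
          · exfalso; omega
          · exfalso; omega
          · exfalso; omega
          · exfalso; omega
          · -- both middle : the genuine case
            obtain ⟨hi3, hi4, hi5, hi6⟩ := hi'
            obtain ⟨hj3, hj4, hj5, hj6⟩ := hj'
            have hdi := (hd_mid (i - (p1 - 1)) (by omega) (by omega)).2.2
            have hdj := (hd_mid (j - (p1 - 1)) (by omega) (by omega)).2.2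
            rw [show i - (p1 - 1) + (p1 - 1) = i by omega] at hdi
            rw [show j - (p1 - 1) + (p1 - 1) = j by omega] at hdj
            refine ⟨i - (p1 - 1), j - (p1 - 1),
              ⟨⟨⟨by omega, by omega⟩, by omega, by omega⟩, by omega, ?_⟩, by omega, by omega⟩
            rw [hz'app, hz'app]
            omega
          · exfalso; omega
          · exfalso; omega
          · exfalso; omega
          · exfalso; omega
          · exfalso; omega
          · exfalso; omega
          · exfalso; omega
          · exfalso; omega
          · exfalso; omega
          · exfalso; omega
      · rintro (⟨a, ⟨ha1, ha2⟩, hai, haj⟩ | ⟨a, b, ⟨⟨⟨ha1, ha2⟩, hb1, hb2⟩, hab, hzz⟩, hai, haj⟩)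
        · subst hai
          subst haj
          have h5 := A5 a ha1 (by omega)
          have hne : z a ≠ 1 := by
            intro h
            have := z.injective (h.trans hA2'.symm)
            omega
          refine ⟨⟨⟨by omega, by omega⟩, by omega, by omega⟩, by omega, by omega⟩
        · subst hai
          subst haj
          rw [hz'app, hz'app] at hzz
          have hda := hd_mid a ha1 ha2
          have hdb := hd_mid b hb1 hb2
          refine ⟨⟨⟨by omega, by omega⟩, by omega, by omega⟩, by omega, by omega⟩
    have hInv :
        ((Finset.Icc 1 n ×ˢ Finset.Icc 1 n).filter (fun ij => ij.1 < ij.2 ∧ z ij.2 < z ij.1)).card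
          = (n - p1) +
            ((Finset.Icc 1 n' ×ˢ Finset.Icc 1 n').filter
              (fun ij => ij.1 < ij.2 ∧ z' ij.2 < z' ij.1)).card := by
      rw [hset, Finset.card_union_of_disjoint, Finset.card_image_of_injective,
        Finset.card_image_of_injective]
      · simp [Nat.card_Icc]
      · rintro ⟨x1, x2⟩ ⟨y1, y2⟩ h
        simp only [Prod.mk.injEq] at h ⊢
        omega
      · intro a b h
        exact (Prod.ext_iff.1 h).1
      · rw [Finset.disjoint_left]
        rintro ⟨i, j⟩ hB hC
        simp only [Finset.mem_image, Finset.mem_Icc, Prod.mk.injEq, Prod.exists,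
          Finset.mem_filter, Finset.mem_product] at hB hC
        obtain ⟨a, ha, hai, haj⟩ := hB
        obtain ⟨a', b', ⟨⟨ha', hb'⟩, _⟩, hai', haj'⟩ := hC
        omega
    -- Piece E : right-hand side bookkeeping
    have hchain : ∀ r, 1 ≤ r → r ≤ σ + 1 → p r ≤ p 1 := by
      intro r h1 h2
      induction r with
      | zero => omega
      | succ m ihm =>
        by_cases hm : m = 0
        · subst hm; exact le_rfl
        · exact le_trans (hmono m (by omega) (by omega)) (ihm (by omega) (by omega))
    have E1card : ∀ j : ℕ, ((Finset.Icc 1 (σ + 1)).filter (fun r => j ≤ 2 * p r - 1)).card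
        = (if j ≤ 2 * p1 - 1 then 1 else 0)
          + ((Finset.Icc 1 σ).filter (fun r => j ≤ 2 * p (r + 1) - 1)).card := by
      intro j
      exact card_filter_Icc_succ σ (fun r => j ≤ 2 * p r - 1)
    have E2card : ∀ j, n' < j →
        ((Finset.Icc 1 σ).filter (fun r => j ≤ 2 * p (r + 1) - 1)).card = 0 := by
      intro j hj
      rw [Finset.card_eq_zero, Finset.filter_eq_empty_iff]
      intro r hr
      have hle := Finset.single_le_sum (f := fun k => 2 * p (k + 1) - 1)
        (fun i _ => Nat.zero_le _) hr
      beta_reduce at hle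
      omega
    have hsum : ∑ j ∈ Finset.Icc 1 (2 * p1 - 1),
        ((Finset.Icc 1 σ).filter (fun r => j ≤ 2 * p (r + 1) - 1)).card = n' := by
      have inner : ∀ r ∈ Finset.Icc 1 σ,
          (∑ j ∈ Finset.Icc 1 (2 * p1 - 1), if j ≤ 2 * p (r + 1) - 1 then 1 else 0)
            = 2 * p (r + 1) - 1 := by
        intro r hr
        obtain ⟨hr1, hr2⟩ := Finset.mem_Icc.1 hr
        have hc := hchain (r + 1) (by omega) (by omega)
        rw [← Finset.card_filter]
        have hfe : (Finset.Icc 1 (2 * p1 - 1)).filter (fun j => j ≤ 2 * p (r + 1) - 1)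
            = Finset.Icc 1 (2 * p (r + 1) - 1) := by
          ext a
          simp only [Finset.mem_filter, Finset.mem_Icc]
          omega
        rw [hfe, Nat.card_Icc]
        omega
      calc ∑ j ∈ Finset.Icc 1 (2 * p1 - 1),
            ((Finset.Icc 1 σ).filter (fun r => j ≤ 2 * p (r + 1) - 1)).card
          = ∑ j ∈ Finset.Icc 1 (2 * p1 - 1), ∑ r ∈ Finset.Icc 1 σ,
              (if j ≤ 2 * p (r + 1) - 1 then 1 else 0) :=
            Finset.sum_congr rfl (fun j _ => Finset.card_filter _ _)
        _ = ∑ r ∈ Finset.Icc 1 σ, ∑ j ∈ Finset.Icc 1 (2 * p1 - 1),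
              (if j ≤ 2 * p (r + 1) - 1 then 1 else 0) := Finset.sum_comm
        _ = ∑ r ∈ Finset.Icc 1 σ, (2 * p (r + 1) - 1) := Finset.sum_congr rfl inner
        _ = n' := hn'def.symm
    have T1 : ∑ j ∈ Finset.Icc 1 n,
          (((Finset.Icc 1 σ).filter (fun r => j ≤ 2 * p (r + 1) - 1)).card : ℤ) ^ 2
        = ∑ j ∈ Finset.Icc 1 n',
          (((Finset.Icc 1 σ).filter (fun r => j ≤ 2 * p (r + 1) - 1)).card : ℤ) ^ 2 := by
      refine (Finset.sum_subset (Finset.Icc_subset_Icc_right (by omega : n' ≤ n)) ?_).symm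
      intro j hj hj'
      simp only [Finset.mem_Icc] at hj hj'
      rw [E2card j (by omega)]
      norm_num
    have T1odd : ∑ j ∈ (Finset.Icc 1 n).filter (fun j => Odd j),
          (((Finset.Icc 1 σ).filter (fun r => j ≤ 2 * p (r + 1) - 1)).card : ℤ)
        = ∑ j ∈ (Finset.Icc 1 n').filter (fun j => Odd j),
          (((Finset.Icc 1 σ).filter (fun r => j ≤ 2 * p (r + 1) - 1)).card : ℤ) := by
      refine (Finset.sum_subset
        (Finset.filter_subset_filter _ (Finset.Icc_subset_Icc_right (by omega : n' ≤ n))) ?_).symm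
      intro j hj hj'
      simp only [Finset.mem_filter, Finset.mem_Icc] at hj hj'
      have hnj : ¬ (1 ≤ j ∧ j ≤ n') := fun hc => hj' ⟨hc, hj.2⟩
      rw [E2card j (by omega)]
      norm_num
    have T2 : ∑ j ∈ Finset.Icc 1 n,
          (((Finset.Icc 1 σ).filter (fun r => j ≤ 2 * p (r + 1) - 1)).card : ℤ)
            * (if j ≤ 2 * p1 - 1 then 1 else 0)
        = (n' : ℤ) := by
      calc ∑ j ∈ Finset.Icc 1 n,
            (((Finset.Icc 1 σ).filter (fun r => j ≤ 2 * p (r + 1) - 1)).card : ℤ)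
              * (if j ≤ 2 * p1 - 1 then 1 else 0)
          = ∑ j ∈ Finset.Icc 1 n, (if j ≤ 2 * p1 - 1 then
              (((Finset.Icc 1 σ).filter (fun r => j ≤ 2 * p (r + 1) - 1)).card : ℤ) else 0) :=
            Finset.sum_congr rfl (fun j _ => by split_ifs <;> simp)
        _ = ∑ j ∈ Finset.Icc 1 (2 * p1 - 1), (if j ≤ 2 * p1 - 1 then
              (((Finset.Icc 1 σ).filter (fun r => j ≤ 2 * p (r + 1) - 1)).card : ℤ) else 0) := by
            refine (Finset.sum_subset (Finset.Icc_subset_Icc_right (by omega : 2 * p1 - 1 ≤ n)) ?_).symm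
            intro j hj hj'
            simp only [Finset.mem_Icc] at hj hj'
            rw [if_neg (by omega)]
        _ = ∑ j ∈ Finset.Icc 1 (2 * p1 - 1),
              (((Finset.Icc 1 σ).filter (fun r => j ≤ 2 * p (r + 1) - 1)).card : ℤ) :=
            Finset.sum_congr rfl (fun j hj => by rw [if_pos (Finset.mem_Icc.1 hj).2])
        _ = ((∑ j ∈ Finset.Icc 1 (2 * p1 - 1),
              ((Finset.Icc 1 σ).filter (fun r => j ≤ 2 * p (r + 1) - 1)).card : ℕ) : ℤ) := by
            rw [Nat.cast_sum]
        _ = (n' : ℤ) := by rw [hsum]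
    have T3 : ∑ j ∈ Finset.Icc 1 n, (if j ≤ 2 * p1 - 1 then (1 : ℤ) else 0) ^ 2
        = ((2 * p1 - 1 : ℕ) : ℤ) := by
      calc ∑ j ∈ Finset.Icc 1 n, (if j ≤ 2 * p1 - 1 then (1 : ℤ) else 0) ^ 2
          = ∑ j ∈ Finset.Icc 1 n, (if j ≤ 2 * p1 - 1 then (1 : ℤ) else 0) :=
            Finset.sum_congr rfl (fun j _ => by split_ifs <;> norm_num)
        _ = (((Finset.Icc 1 n).filter (fun j => j ≤ 2 * p1 - 1)).card : ℤ) := by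
            rw [Finset.sum_boole]
        _ = ((2 * p1 - 1 : ℕ) : ℤ) := by
            have hfe : (Finset.Icc 1 n).filter (fun j => j ≤ 2 * p1 - 1)
                = Finset.Icc 1 (2 * p1 - 1) := by
              ext a
              simp only [Finset.mem_filter, Finset.mem_Icc]
              omega
            rw [hfe, Nat.card_Icc]
            norm_num
    have T4 : ∑ j ∈ (Finset.Icc 1 n).filter (fun j => Odd j),
          (if j ≤ 2 * p1 - 1 then (1 : ℤ) else 0) = (p1 : ℤ) := by
      rw [Finset.sum_boole]
      have hfe : ((Finset.Icc 1 n).filter (fun j => Odd j)).filter (fun j => j ≤ 2 * p1 - 1)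
          = (Finset.Icc 1 (2 * p1 - 1)).filter (fun j => Odd j) := by
        ext a
        simp only [Finset.mem_filter, Finset.mem_Icc]
        constructor
        · rintro ⟨⟨⟨h1, h2⟩, ho⟩, h3⟩
          exact ⟨⟨h1, h3⟩, ho⟩
        · rintro ⟨⟨h1, h3⟩, ho⟩
          exact ⟨⟨⟨h1, by omega⟩, ho⟩, h3⟩
      rw [hfe, card_filter_odd]
    -- apply the induction hypothesis
    have hp1' : ∀ r, 1 ≤ r → r ≤ σ → 1 ≤ p (r + 1) :=
      fun r h1 h2 => hp1 (r + 1) (by omega) (by omega)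
    have hmono' : ∀ r, 1 ≤ r → r < σ → p (r + 1 + 1) ≤ p (r + 1) :=
      fun r h1 h2 => hmono (r + 1) (by omega) (by omega)
    have IH := ih n' (fun k => p (k + 1)) z' hp1' hmono' hn'def hz1' hz2' hz3' hz0'
    beta_reduce at IH
    -- final assembly
    have Sodd : ∑ j ∈ (Finset.Icc 1 n).filter (fun j => Odd j),
          (((Finset.Icc 1 (σ + 1)).filter (fun r => j ≤ 2 * p r - 1)).card : ℤ)
        = (∑ j ∈ (Finset.Icc 1 n').filter (fun j => Odd j),
            (((Finset.Icc 1 σ).filter (fun r => j ≤ 2 * p (r + 1) - 1)).card : ℤ)) + (p1 : ℤ) := by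
      calc ∑ j ∈ (Finset.Icc 1 n).filter (fun j => Odd j),
            (((Finset.Icc 1 (σ + 1)).filter (fun r => j ≤ 2 * p r - 1)).card : ℤ)
          = ∑ j ∈ (Finset.Icc 1 n).filter (fun j => Odd j),
              ((((Finset.Icc 1 σ).filter (fun r => j ≤ 2 * p (r + 1) - 1)).card : ℤ)
                + (if j ≤ 2 * p1 - 1 then (1 : ℤ) else 0)) :=
            Finset.sum_congr rfl (fun j _ => by rw [E1card j]; push_cast; ring)
        _ = (∑ j ∈ (Finset.Icc 1 n).filter (fun j => Odd j),
              (((Finset.Icc 1 σ).filter (fun r => j ≤ 2 * p (r + 1) - 1)).card : ℤ))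
            + ∑ j ∈ (Finset.Icc 1 n).filter (fun j => Odd j),
              (if j ≤ 2 * p1 - 1 then (1 : ℤ) else 0) := Finset.sum_add_distrib
        _ = _ := by rw [T1odd, T4]
    have SQ : ∑ j ∈ Finset.Icc 1 n,
          (((Finset.Icc 1 (σ + 1)).filter (fun r => j ≤ 2 * p r - 1)).card : ℤ) ^ 2
        = (∑ j ∈ Finset.Icc 1 n',
            (((Finset.Icc 1 σ).filter (fun r => j ≤ 2 * p (r + 1) - 1)).card : ℤ) ^ 2)
          + 2 * (n' : ℤ) + ((2 * p1 - 1 : ℕ) : ℤ) := by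
      calc ∑ j ∈ Finset.Icc 1 n,
            (((Finset.Icc 1 (σ + 1)).filter (fun r => j ≤ 2 * p r - 1)).card : ℤ) ^ 2
          = ∑ j ∈ Finset.Icc 1 n,
              ((((Finset.Icc 1 σ).filter (fun r => j ≤ 2 * p (r + 1) - 1)).card : ℤ) ^ 2
                + (2 * ((((Finset.Icc 1 σ).filter (fun r => j ≤ 2 * p (r + 1) - 1)).card : ℤ)
                    * (if j ≤ 2 * p1 - 1 then (1 : ℤ) else 0))
                  + (if j ≤ 2 * p1 - 1 then (1 : ℤ) else 0) ^ 2)) :=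
            Finset.sum_congr rfl (fun j _ => by rw [E1card j]; push_cast; ring)
        _ = (∑ j ∈ Finset.Icc 1 n,
              (((Finset.Icc 1 σ).filter (fun r => j ≤ 2 * p (r + 1) - 1)).card : ℤ) ^ 2)
            + ((∑ j ∈ Finset.Icc 1 n,
                2 * ((((Finset.Icc 1 σ).filter (fun r => j ≤ 2 * p (r + 1) - 1)).card : ℤ)
                  * (if j ≤ 2 * p1 - 1 then (1 : ℤ) else 0)))
              + ∑ j ∈ Finset.Icc 1 n, (if j ≤ 2 * p1 - 1 then (1 : ℤ) else 0) ^ 2) := by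
            rw [Finset.sum_add_distrib, Finset.sum_add_distrib]
        _ = (∑ j ∈ Finset.Icc 1 n,
              (((Finset.Icc 1 σ).filter (fun r => j ≤ 2 * p (r + 1) - 1)).card : ℤ) ^ 2)
            + (2 * (∑ j ∈ Finset.Icc 1 n,
                ((((Finset.Icc 1 σ).filter (fun r => j ≤ 2 * p (r + 1) - 1)).card : ℤ)
                  * (if j ≤ 2 * p1 - 1 then (1 : ℤ) else 0)))
              + ∑ j ∈ Finset.Icc 1 n, (if j ≤ 2 * p1 - 1 then (1 : ℤ) else 0) ^ 2) := by
            rw [Finset.mul_sum]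
        _ = _ := by rw [T1, T2, T3]; ring
    rw [hInv, SQ, Sodd]
    have hc2 : ((n - p1 + ((Finset.Icc 1 n' ×ˢ Finset.Icc 1 n').filter
        (fun ij => ij.1 < ij.2 ∧ z' ij.2 < z' ij.1)).card : ℕ) : ℤ)
        = ((n : ℤ) - (p1 : ℤ)) + (((Finset.Icc 1 n' ×ˢ Finset.Icc 1 n').filter
            (fun ij => ij.1 < ij.2 ∧ z' ij.2 < z' ij.1)).card : ℤ) := by
      push_cast [Nat.cast_sub hple]
      ring
    rw [hc2]
    have hc3 : ((2 * p1 - 1 : ℕ) : ℤ) = 2 * (p1 : ℤ) - 1 := by omega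
    have hc4 : (n : ℤ) = 2 * (p1 : ℤ) - 1 + (n' : ℤ) := by omega
    rw [hc3]
    linarith [IH]

/-- §5.10 (computational content of Theorem 1.14 in the twisted `GL_n` case):
with `n = (2p₁−1)+⋯+(2p_σ−1)`, `f_j = #{r : 2p_r−1 ≥ j}` and `z = z_{p_*}` the permutation
of `{1,…,n}` defined in 4.4, one has
`2·inv(z) = Σ_j f_j² − 2·Σ_{j odd} f_j + n`. -/
theorem two_mul_inversions_zp_eq (σ n : ℕ) (p : ℕ → ℕ) (z : Equiv.Perm ℕ)
    (hσ : 1 ≤ σ)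
    (hp1 : ∀ r, 1 ≤ r → r ≤ σ → 1 ≤ p r)
    (hmono : ∀ r, 1 ≤ r → r < σ → p (r + 1) ≤ p r)
    (hn : n = ∑ r ∈ Finset.Icc 1 σ, (2 * p r - 1))
    (hz1 : ∀ r ∈ Finset.Icc 1 σ, ∀ i ∈ Finset.Icc 1 (p r - 1),
      z ((∑ k ∈ Finset.Icc 1 (r - 1), (p k - 1)) + i) =
        (∑ k ∈ Finset.Icc 1 (r - 1), p k) + i + 1)
    (hz2 : ∀ r ∈ Finset.Icc 1 σ,
      z (n - ((∑ k ∈ Finset.Icc 1 (r - 1), p k) + p r - 1)) =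
        (∑ k ∈ Finset.Icc 1 (r - 1), p k) + 1)
    (hz3 : ∀ r ∈ Finset.Icc 1 σ, ∀ i ∈ Finset.range (p r - 1),
      z (n - ((∑ k ∈ Finset.Icc 1 (r - 1), p k) + i)) =
        n - ((∑ k ∈ Finset.Icc 1 (r - 1), (p k - 1)) + i))
    (hz0 : ∀ m, m = 0 ∨ n < m → z m = m) :
    2 * ((((Finset.Icc 1 n) ×ˢ (Finset.Icc 1 n)).filter
        (fun ij => ij.1 < ij.2 ∧ z ij.2 < z ij.1)).card : ℤ) =
      (∑ j ∈ Finset.Icc 1 n,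
          (((Finset.Icc 1 σ).filter (fun r => j ≤ 2 * p r - 1)).card : ℤ) ^ 2)
        - 2 * (∑ j ∈ (Finset.Icc 1 n).filter (fun j => Odd j),
            (((Finset.Icc 1 σ).filter (fun r => j ≤ 2 * p r - 1)).card : ℤ))
        + (n : ℤ) := by
  exact zp_aux σ n p z hp1 hmono hn hz1 hz2 hz3 hz0
end

section
/- Let σ ≥ 1 and p_1 ≥ p_2 ≥ ⋯ ≥ p_σ ≥ 1 be integers with n = (2p_1−1)+⋯+(2p_σ−1), let z_{p_*} be the associated permutation of {1,…,n}, and let w̄ be the permutation j ↦ n+1−j. Then the permutation w̄ ∘ z_{p_*} has exactly σ orbits on {1,…,n}, and the multiset of their cardinalities is {2p_1−1, 2p_2−1, …, 2p_σ−1}; that is, w̄ ∘ z_{p_*} is a product of σ disjoint cycles of sizes 2p_1−1, …, 2p_σ−1. -/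
/-!
With `P_r`, `Q_r` the partial sums of the `p_k` and of the `p_k - 1`, the `r`-th cycle lives on the
low interval `[Q_r + 1, Q_{r+1}]` together with the high interval `[n - P_{r+1} + 1, n - P_r]`:
`w̄ z` bounces between them, `n - P_r ↦ Q_r + 1 ↦ n - P_r - 1 ↦ Q_r + 2 ↦ ⋯`, and closes up after
`2 p_r - 1` steps. These blocks are disjoint and their sizes add up to `n`, so they exhaust
`{1, …, n}`.
-/

open Finset

theorem Equiv.Perm.exists_pow_apply_pow_apply_eq {α : Type*} {g : Equiv.Perm α} {x : α} {L : ℕ}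
    (hL : 0 < L) (hx : (g ^ L) x = x) (a b : ℕ) : ∃ m, (g ^ m) ((g ^ a) x) = (g ^ b) x := by
  obtain ⟨L, rfl⟩ : ∃ k, L = k + 1 := ⟨L - 1, by omega⟩
  refine ⟨L * a + b, ?_⟩
  rw [← Equiv.Perm.mul_apply, ← pow_add, show L * a + b + a = b + (L + 1) * a by ring, pow_add,
    Equiv.Perm.mul_apply, pow_mul, pow_apply_eq_self_of_apply_eq_self hx]

/-- The paper's `P_r` and `Q_r` are `partialSum p r` and `partialSum (p · - 1) r`. -/
def partialSum (a : ℕ → ℕ) (r : ℕ) : ℕ := ∑ k ∈ Icc 1 (r - 1), a k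

theorem partialSum_succ (a : ℕ → ℕ) {r : ℕ} (hr : 1 ≤ r) :
    partialSum a (r + 1) = partialSum a r + a r := by
  obtain ⟨r, rfl⟩ := Nat.exists_eq_add_of_le' hr
  simp only [partialSum, Nat.add_sub_cancel]
  exact sum_Icc_succ_top (Nat.le_add_left 1 r) a

theorem partialSum_mono (a : ℕ → ℕ) : Monotone (partialSum a) := fun _ _ h =>
  sum_le_sum_of_subset (Icc_subset_Icc_right (Nat.sub_le_sub_right h 1))

theorem partialSum_add_le (a : ℕ → ℕ) {r s : ℕ} (hr : 1 ≤ r) (hrs : r < s) :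
    partialSum a r + a r ≤ partialSum a s :=
  partialSum_succ a hr ▸ partialSum_mono a hrs

def zigzagBlock (n a b p : ℕ) : Finset ℕ :=
  Icc (a + 1) (a + (p - 1)) ∪ Icc (n - (b + p) + 1) (n - b)

/-- `g` runs through `zigzagBlock n a b p` as the cycle
`n - b ↦ a + 1 ↦ n - (b + 1) ↦ a + 2 ↦ ⋯ ↦ a + (p - 1) ↦ n - (b + p - 1) ↦ n - b`. -/
structure ZigzagOn (g : Equiv.Perm ℕ) (n a b p : ℕ) : Prop where
  one_le : 1 ≤ p
  add_le : a + (p - 1) + b + p ≤ n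
  apply_low : ∀ i, 1 ≤ i → i ≤ p - 1 → g (a + i) = n - (b + i)
  apply_high : ∀ i, i + 1 < p → g (n - (b + i)) = a + i + 1
  apply_top : g (n - (b + (p - 1))) = n - b

theorem disjoint_zigzagBlock {n a b p a' b' p' : ℕ} (ha : a + (p - 1) ≤ a') (hb : b + p ≤ b')
    (hle : a' + (p' - 1) + b' + p' ≤ n) :
    Disjoint (zigzagBlock n a b p) (zigzagBlock n a' b' p') := by
  simp only [zigzagBlock, disjoint_left, mem_union, mem_Icc]
  omega

namespace ZigzagOn

variable {g : Equiv.Perm ℕ} {n a b p : ℕ}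

theorem of_reflect_mul {z w : Equiv.Perm ℕ} (hp : 1 ≤ p) (hle : a + (p - 1) + b + p ≤ n)
    (hw : ∀ j ∈ Icc 1 n, w j = n + 1 - j)
    (hz_low : ∀ i ∈ Icc 1 (p - 1), z (a + i) = b + i + 1)
    (hz_top : z (n - (b + p - 1)) = b + 1)
    (hz_high : ∀ i ∈ range (p - 1), z (n - (b + i)) = n - (a + i)) :
    ZigzagOn (w * z) n a b p where
  one_le := hp
  add_le := hle
  apply_low i hi₁ hi₂ := by
    rw [Equiv.Perm.mul_apply, hz_low i (mem_Icc.2 ⟨hi₁, hi₂⟩),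
      hw _ (mem_Icc.2 ⟨by omega, by omega⟩)]
    omega
  apply_high i hi := by
    rw [Equiv.Perm.mul_apply, hz_high i (mem_range.2 (by omega)),
      hw _ (mem_Icc.2 ⟨by omega, by omega⟩)]
    omega
  apply_top := by
    rw [Equiv.Perm.mul_apply, ← Nat.add_sub_assoc hp, hz_top, hw _ (mem_Icc.2 ⟨by omega, by omega⟩)]
    omega

theorem pow_two_mul_apply (h : ZigzagOn g n a b p) {i : ℕ} (hi : i ≤ p - 1) :
    (g ^ (2 * i)) (n - b) = n - (b + i) := by
  induction i with
  | zero => rfl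
  | succ i ih =>
    rw [show 2 * (i + 1) = 2 * i + 1 + 1 by ring, pow_succ', Equiv.Perm.mul_apply, pow_succ',
      Equiv.Perm.mul_apply, ih (by omega), h.apply_high i (by omega), add_assoc,
      h.apply_low (i + 1) (by omega) hi]

theorem pow_two_mul_add_one_apply (h : ZigzagOn g n a b p) {i : ℕ} (hi : i + 1 < p) :
    (g ^ (2 * i + 1)) (n - b) = a + i + 1 := by
  rw [pow_succ', Equiv.Perm.mul_apply, h.pow_two_mul_apply (by omega), h.apply_high i hi]

theorem pow_apply_self (h : ZigzagOn g n a b p) : (g ^ (2 * p - 1)) (n - b) = n - b := by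
  rw [show 2 * p - 1 = 2 * (p - 1) + 1 by have := h.one_le; omega, pow_succ',
    Equiv.Perm.mul_apply, h.pow_two_mul_apply le_rfl, h.apply_top]

theorem exists_pow_apply_sub_eq (h : ZigzagOn g n a b p) {x : ℕ} (hx : x ∈ zigzagBlock n a b p) :
    ∃ m, (g ^ m) (n - b) = x := by
  have := h.add_le
  simp only [zigzagBlock, mem_union, mem_Icc] at hx
  rcases hx with hx | hx
  · refine ⟨2 * (x - a - 1) + 1, ?_⟩
    rw [h.pow_two_mul_add_one_apply (by omega)]
    omega
  · refine ⟨2 * (n - b - x), ?_⟩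
    rw [h.pow_two_mul_apply (by omega)]
    omega

theorem apply_mem (h : ZigzagOn g n a b p) {x : ℕ} (hx : x ∈ zigzagBlock n a b p) :
    g x ∈ zigzagBlock n a b p := by
  have := h.add_le
  simp only [zigzagBlock, mem_union, mem_Icc] at hx ⊢
  rcases hx with hx | hx
  · rw [show x = a + (x - a) by omega, h.apply_low (x - a) (by omega) (by omega)]
    omega
  · rw [show x = n - (b + (n - b - x)) by omega]
    by_cases hi : n - b - x + 1 < p
    · rw [h.apply_high _ hi]
      omega
    · rw [show n - b - x = p - 1 by omega, h.apply_top]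
      omega

theorem exists_pow_apply_eq_of_mem (h : ZigzagOn g n a b p) {x y : ℕ}
    (hx : x ∈ zigzagBlock n a b p) (hy : y ∈ zigzagBlock n a b p) : ∃ m, (g ^ m) x = y := by
  obtain ⟨k, rfl⟩ := h.exists_pow_apply_sub_eq hx
  obtain ⟨l, rfl⟩ := h.exists_pow_apply_sub_eq hy
  exact Equiv.Perm.exists_pow_apply_pow_apply_eq (by have := h.one_le; omega) h.pow_apply_self k l

theorem subset_Icc (h : ZigzagOn g n a b p) : zigzagBlock n a b p ⊆ Icc 1 n := by
  have := h.add_le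
  intro x hx
  simp only [zigzagBlock, mem_union, mem_Icc] at hx ⊢
  omega

theorem card_zigzagBlock (h : ZigzagOn g n a b p) : #(zigzagBlock n a b p) = 2 * p - 1 := by
  have := h.add_le
  rw [zigzagBlock, card_union_of_disjoint (disjoint_left.2 fun x hx hx' => by
    simp only [mem_Icc] at hx hx'
    omega), Nat.card_Icc, Nat.card_Icc]
  omega

end ZigzagOn

theorem wbar_mul_zp_cycle_structure_general (σ n : ℕ) (p : ℕ → ℕ) (z wbar : Equiv.Perm ℕ)
    (hp1 : ∀ r, 1 ≤ r → r ≤ σ → 1 ≤ p r)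
    (hn : n = ∑ r ∈ Finset.Icc 1 σ, (2 * p r - 1))
    (hz1 : ∀ r ∈ Finset.Icc 1 σ, ∀ i ∈ Finset.Icc 1 (p r - 1),
      z ((∑ k ∈ Finset.Icc 1 (r - 1), (p k - 1)) + i) =
        (∑ k ∈ Finset.Icc 1 (r - 1), p k) + i + 1)
    (hz2 : ∀ r ∈ Finset.Icc 1 σ,
      z (n - ((∑ k ∈ Finset.Icc 1 (r - 1), p k) + p r - 1)) =
        (∑ k ∈ Finset.Icc 1 (r - 1), p k) + 1)
    (hz3 : ∀ r ∈ Finset.Icc 1 σ, ∀ i ∈ Finset.range (p r - 1),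
      z (n - ((∑ k ∈ Finset.Icc 1 (r - 1), p k) + i)) =
        n - ((∑ k ∈ Finset.Icc 1 (r - 1), (p k - 1)) + i))
    (hwbar : ∀ j ∈ Finset.Icc 1 n, wbar j = n + 1 - j) :
    ∃ O : ℕ → Finset ℕ,
      (∀ r ∈ Finset.Icc 1 σ, O r ⊆ Finset.Icc 1 n) ∧
      (∀ r ∈ Finset.Icc 1 σ, (O r).card = 2 * p r - 1) ∧
      (∀ r ∈ Finset.Icc 1 σ, ∀ s ∈ Finset.Icc 1 σ, r ≠ s → Disjoint (O r) (O s)) ∧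
      (Finset.Icc 1 n = (Finset.Icc 1 σ).biUnion O) ∧
      (∀ r ∈ Finset.Icc 1 σ, ∀ i ∈ O r, (wbar * z) i ∈ O r) ∧
      (∀ r ∈ Finset.Icc 1 σ, ∀ i ∈ O r, ∀ j ∈ O r, ∃ m : ℕ, ((wbar * z) ^ m) i = j) := by
  set P := partialSum p
  set Q := partialSum (fun k => p k - 1)
  have hPQ : Q (σ + 1) + P (σ + 1) = n := by
    simp only [Q, P, partialSum, Nat.add_sub_cancel, hn, ← sum_add_distrib]
    exact sum_congr rfl fun k _ => by omega
  have hle : ∀ r ∈ Icc 1 σ, Q r + (p r - 1) + P r + p r ≤ n := fun r hr => by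
    obtain ⟨hr₁, hr₂⟩ := mem_Icc.1 hr
    have hQ : Q r + (p r - 1) ≤ Q (σ + 1) := partialSum_add_le _ hr₁ (by omega)
    have hP : P r + p r ≤ P (σ + 1) := partialSum_add_le _ hr₁ (by omega)
    omega
  have hzig : ∀ r ∈ Icc 1 σ, ZigzagOn (wbar * z) n (Q r) (P r) (p r) := fun r hr =>
    .of_reflect_mul (hp1 r (mem_Icc.1 hr).1 (mem_Icc.1 hr).2) (hle r hr) hwbar
      (hz1 r hr) (hz2 r hr) (hz3 r hr)
  have hdisj : ∀ r ∈ Icc 1 σ, ∀ s ∈ Icc 1 σ, r ≠ s →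
      Disjoint (zigzagBlock n (Q r) (P r) (p r)) (zigzagBlock n (Q s) (P s) (p s)) := by
    have hlt : ∀ r ∈ Icc 1 σ, ∀ s ∈ Icc 1 σ, r < s →
        Disjoint (zigzagBlock n (Q r) (P r) (p r)) (zigzagBlock n (Q s) (P s) (p s)) :=
      fun r hr s hs hrs => disjoint_zigzagBlock (partialSum_add_le _ (mem_Icc.1 hr).1 hrs)
        (partialSum_add_le _ (mem_Icc.1 hr).1 hrs) (hle s hs)
    exact fun r hr s hs hrs => hrs.lt_or_gt.elim (hlt r hr s hs) fun h => (hlt s hs r hr h).symm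
  refine ⟨fun r => zigzagBlock n (Q r) (P r) (p r), fun r hr => (hzig r hr).subset_Icc,
    fun r hr => (hzig r hr).card_zigzagBlock, hdisj, ?_, fun r hr _ => (hzig r hr).apply_mem,
    fun r hr _ hx _ hy => (hzig r hr).exists_pow_apply_eq_of_mem hx hy⟩
  refine (eq_of_subset_of_card_le (biUnion_subset.2 fun r hr => (hzig r hr).subset_Icc) ?_).symm
  rw [card_biUnion hdisj, sum_congr rfl fun r hr => (hzig r hr).card_zigzagBlock, Nat.card_Icc,
    Nat.add_sub_cancel, hn]

/-- §4.4: the permutation `w̄ ∘ z_{p_*}` of `{1,…,n}` (where `w̄ : j ↦ n+1−j`) is a product of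
`σ` disjoint cycles of sizes `2p₁−1, …, 2p_σ−1`; i.e. it has exactly `σ` orbits on `{1,…,n}`,
of cardinalities `2p₁−1, …, 2p_σ−1`. -/
theorem wbar_mul_zp_cycle_structure (σ n : ℕ) (p : ℕ → ℕ) (z wbar : Equiv.Perm ℕ)
    (hσ : 1 ≤ σ)
    (hp1 : ∀ r, 1 ≤ r → r ≤ σ → 1 ≤ p r)
    (hmono : ∀ r, 1 ≤ r → r < σ → p (r + 1) ≤ p r)
    (hn : n = ∑ r ∈ Finset.Icc 1 σ, (2 * p r - 1))
    (hz1 : ∀ r ∈ Finset.Icc 1 σ, ∀ i ∈ Finset.Icc 1 (p r - 1),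
      z ((∑ k ∈ Finset.Icc 1 (r - 1), (p k - 1)) + i) =
        (∑ k ∈ Finset.Icc 1 (r - 1), p k) + i + 1)
    (hz2 : ∀ r ∈ Finset.Icc 1 σ,
      z (n - ((∑ k ∈ Finset.Icc 1 (r - 1), p k) + p r - 1)) =
        (∑ k ∈ Finset.Icc 1 (r - 1), p k) + 1)
    (hz3 : ∀ r ∈ Finset.Icc 1 σ, ∀ i ∈ Finset.range (p r - 1),
      z (n - ((∑ k ∈ Finset.Icc 1 (r - 1), p k) + i)) =
        n - ((∑ k ∈ Finset.Icc 1 (r - 1), (p k - 1)) + i))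
    (hz0 : ∀ m, m = 0 ∨ n < m → z m = m)
    (hwbar : ∀ j ∈ Finset.Icc 1 n, wbar j = n + 1 - j)
    (hwbar0 : ∀ m, m = 0 ∨ n < m → wbar m = m) :
    ∃ O : ℕ → Finset ℕ,
      (∀ r ∈ Finset.Icc 1 σ, O r ⊆ Finset.Icc 1 n) ∧
      (∀ r ∈ Finset.Icc 1 σ, (O r).card = 2 * p r - 1) ∧
      (∀ r ∈ Finset.Icc 1 σ, ∀ s ∈ Finset.Icc 1 σ, r ≠ s → Disjoint (O r) (O s)) ∧
      (Finset.Icc 1 n = (Finset.Icc 1 σ).biUnion O) ∧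
      (∀ r ∈ Finset.Icc 1 σ, ∀ i ∈ O r, (wbar * z) i ∈ O r) ∧
      (∀ r ∈ Finset.Icc 1 σ, ∀ i ∈ O r, ∀ j ∈ O r, ∃ m : ℕ, ((wbar * z) ^ m) i = j) :=
  wbar_mul_zp_cycle_structure_general σ n p z wbar hp1 hn hz1 hz2 hz3 hwbar
end

section
/- (4.8(a), case q = 1.) Suppose v_1, …, v_σ ∈ V satisfy: B(v_r, T^k v_t) = 0 for all t < r and −p_t ≤ k ≤ p_t − 2; B(v_r, T^k v_r) = 0 for −p_r + 1 ≤ k ≤ p_r − 2; and B(v_r, T^{p_r−1} v_r) ≠ 0, for every r ∈ {1,…,σ}. Then the n vectors T^{h−p_k} v_k, for k ∈ {1,…,σ} and 0 ≤ h ≤ 2p_k − 2, form a basis of V. -/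
/-!
Pair the family against the functionals `x ↦ B(v_r, T^{-h} x)`. Since `T` is an isometry of `B`
and `B(x, T^m y) = B(y, T^{-m-1} x)`, the 𝒮-conditions say exactly that, once the indices `(r, h)`
are ordered by `h` and then by decreasing `r`, the pairing matrix is triangular with diagonal
entries `B(v_r, T^{-p_r} v_r) = B(v_r, T^{p_r-1} v_r) ≠ 0`. Hence the `n` vectors are linearly
independent, so they form a basis of the `n`-dimensional space `V`.
-/

open Module Finset

theorem linearIndependent_of_triangular_pairing {K V ι α : Type*} [CommRing K] [IsDomain K]
    [AddCommGroup V] [Module K V] [Fintype ι] [LinearOrder α]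
    (u : ι → V) (φ : ι → Dual K V) (key : ι → α)
    (h_zero : ∀ i j, i ≠ j → key i ≤ key j → φ i (u j) = 0) (h_diag : ∀ i, φ i (u i) ≠ 0) :
    LinearIndependent K u := by
  rw [Fintype.linearIndependent_iff]
  intro g hg i
  induction i using (Finite.wellFounded_of_trans_of_irrefl (InvImage (· < ·) key)).induction
    with | _ i ih
  have hsum : ∑ j, g j * φ i (u j) = 0 := by simpa using congrArg (φ i) hg
  rw [sum_eq_single i (fun j _ hji => ?_) (by simp)] at hsum
  · exact (mul_eq_zero.mp hsum).resolve_right (h_diag i)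
  rcases lt_or_ge (key j) (key i) with hlt | hle
  · rw [ih j hlt, zero_mul]
  · rw [h_zero i j hji.symm hle, mul_zero]

theorem Fintype.card_sigma_fin_succ (σ : ℕ) (f : ℕ → ℕ) :
    Fintype.card (Σ k : Fin σ, Fin (f (k.1 + 1))) = ∑ r ∈ Icc 1 σ, f r := by
  rw [Fintype.card_sigma]
  simp only [Fintype.card_fin]
  rw [Fin.sum_univ_eq_sum_range (fun k => f (k + 1)), range_eq_Ico, sum_Ico_add' f,
    ← Ico_add_one_right_eq_Icc]

section Isometry

variable {R V : Type*} [CommSemiring R] [AddCommMonoid V] [Module R V]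
  {B : V →ₗ[R] V →ₗ[R] R} {T : V ≃ₗ[R] V}

theorem LinearEquiv.zpow_apply_zpow_apply (a b : ℤ) (x : V) :
    (T ^ a) ((T ^ b) x) = (T ^ (a + b)) x := by
  rw [zpow_add, LinearEquiv.mul_apply]

theorem LinearMap.apply_zpow_apply_zpow (hT : ∀ x y, B (T x) (T y) = B x y) (m : ℤ) (x y : V) :
    B ((T ^ m) x) ((T ^ m) y) = B x y := by
  induction m using Int.induction_on generalizing x y with
  | zero => rfl
  | succ k ih => rw [zpow_add_one, LinearEquiv.mul_apply, LinearEquiv.mul_apply, ih, hT]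
  | pred k ih =>
    rw [zpow_sub_one, LinearEquiv.mul_apply, LinearEquiv.mul_apply, ih, ← hT]
    simp only [LinearEquiv.coe_inv, LinearEquiv.apply_symm_apply]

theorem LinearMap.apply_zpow_eq_apply_zpow_neg_sub_one (hT : ∀ x y, B (T x) y = B y x)
    (m : ℤ) (x y : V) : B x ((T ^ m) y) = B y ((T ^ (-m - 1)) x) := by
  have hTT : ∀ x y, B (T x) (T y) = B x y := fun x y => (hT x (T y)).trans (hT y x)
  calc B x ((T ^ m) y) = B ((T ^ (m + 1)) y) x := by
        rw [← hT, add_comm, zpow_one_add, LinearEquiv.mul_apply]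
    _ = B ((T ^ (-m - 1)) ((T ^ (m + 1)) y)) ((T ^ (-m - 1)) x) :=
        (LinearMap.apply_zpow_apply_zpow hTT _ _ _).symm
    _ = B y ((T ^ (-m - 1)) x) := by
        rw [LinearEquiv.zpow_apply_zpow_apply, show -m - 1 + (m + 1) = 0 by ring]
        rfl

end Isometry

structure SConditions {K V : Type*} [CommRing K] [AddCommGroup V] [Module K V]
    (B : V →ₗ[K] V →ₗ[K] K) (T : V ≃ₗ[K] V) (σ : ℕ) (p : ℕ → ℕ) (v : ℕ → V) : Prop where
  cross : ∀ r ∈ Icc 1 σ, ∀ t ∈ Icc 1 σ, t < r →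
    ∀ m : ℤ, -(p t : ℤ) ≤ m → m ≤ (p t : ℤ) - 2 → B (v r) ((T ^ m) (v t)) = 0
  self : ∀ r ∈ Icc 1 σ, ∀ m : ℤ, -(p r : ℤ) + 1 ≤ m → m ≤ (p r : ℤ) - 2 →
    B (v r) ((T ^ m) (v r)) = 0
  top_ne_zero : ∀ r ∈ Icc 1 σ, B (v r) ((T ^ ((p r : ℤ) - 1)) (v r)) ≠ 0

namespace SConditions

variable {K V : Type*} [CommRing K] [AddCommGroup V] [Module K V]
  {B : V →ₗ[K] V →ₗ[K] K} {T : V ≃ₗ[K] V} {σ : ℕ} {p : ℕ → ℕ} {v : ℕ → V}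

theorem apply_zpow_eq_zero (hS : SConditions B T σ p v) (hT : ∀ x y, B (T x) y = B y x)
    (hp : AntitoneOn p (Set.Icc 1 σ)) {r t h h' : ℕ} (hr : r ∈ Icc 1 σ) (ht : t ∈ Icc 1 σ)
    (hh' : h' < 2 * p t - 1) (hlt : h < h' ∨ h = h' ∧ t < r) :
    B (v r) ((T ^ ((h' : ℤ) - h - p t)) (v t)) = 0 := by
  rcases lt_trichotomy t r with htr | rfl | hrt
  · exact hS.cross r hr t ht htr _ (by omega) (by omega)
  · exact hS.self t ht _ (by omega) (by omega)
  · have hprt : p t ≤ p r :=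
      hp (Set.mem_Icc.2 (mem_Icc.1 hr)) (Set.mem_Icc.2 (mem_Icc.1 ht)) hrt.le
    rw [LinearMap.apply_zpow_eq_apply_zpow_neg_sub_one hT]
    exact hS.cross t ht r hr hrt _ (by omega) (by omega)

theorem apply_zpow_neg_ne_zero (hS : SConditions B T σ p v) (hT : ∀ x y, B (T x) y = B y x)
    {r : ℕ} (hr : r ∈ Icc 1 σ) : B (v r) ((T ^ (-(p r : ℤ))) (v r)) ≠ 0 := by
  rw [LinearMap.apply_zpow_eq_apply_zpow_neg_sub_one hT, neg_neg]
  exact hS.top_ne_zero r hr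

theorem linearIndependent [IsDomain K] (hS : SConditions B T σ p v)
    (hT : ∀ x y, B (T x) y = B y x) (hp : AntitoneOn p (Set.Icc 1 σ)) :
    LinearIndependent K (fun kh : Σ k : Fin σ, Fin (2 * p (k.1 + 1) - 1) =>
      (T ^ ((kh.2 : ℤ) - p (kh.1.1 + 1))) (v (kh.1.1 + 1))) := by
  have mem : ∀ k : Fin σ, k.1 + 1 ∈ Icc 1 σ := fun k => mem_Icc.2 ⟨Nat.le_add_left 1 _, k.2⟩
  refine linearIndependent_of_triangular_pairing _
    (fun kh => B (v (kh.1.1 + 1)) ∘ₗ (T ^ (-(kh.2 : ℤ))).toLinearMap)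
    (fun kh => toLex (kh.2.1, OrderDual.toDual kh.1.1)) ?_ ?_
  · rintro ⟨⟨k, hk⟩, ⟨h, hh⟩⟩ ⟨⟨k', hk'⟩, ⟨h', hh'⟩⟩ hne hle
    have hlt : h < h' ∨ h = h' ∧ k' + 1 < k + 1 := by
      rw [Prod.Lex.toLex_le_toLex] at hle
      rcases hle with hlt | ⟨rfl, hkk⟩
      · exact .inl hlt
      · refine .inr ⟨rfl, ?_⟩
        have : k' ≠ k := by rintro rfl; exact hne rfl
        have : k' ≤ k := hkk
        omega
    simp only [LinearMap.comp_apply, LinearEquiv.coe_coe, LinearEquiv.zpow_apply_zpow_apply]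
    convert hS.apply_zpow_eq_zero hT hp (mem ⟨k, hk⟩) (mem ⟨k', hk'⟩) hh' hlt using 4
    ring
  · rintro ⟨k, h⟩
    simp only [LinearMap.comp_apply, LinearEquiv.coe_coe, LinearEquiv.zpow_apply_zpow_apply,
      neg_add_eq_sub, sub_sub_cancel_left]
    exact hS.apply_zpow_neg_ne_zero hT (mem k)

end SConditions

theorem S_conditions_family_is_basis_general
    (𝕜 : Type*) [Field 𝕜]
    (V : Type*) [AddCommGroup V] [Module 𝕜 V] [FiniteDimensional 𝕜 V]
    (σ n : ℕ) (p : ℕ → ℕ)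
    (hmono : ∀ r, 1 ≤ r → r < σ → p (r + 1) ≤ p r)
    (hn : n = ∑ r ∈ Finset.Icc 1 σ, (2 * p r - 1))
    (hdimV : finrank 𝕜 V = n)
    (B : V →ₗ[𝕜] V →ₗ[𝕜] 𝕜)
    (T : V ≃ₗ[𝕜] V)
    (hT : ∀ x y, B (T x) y = B y x)
    (v : ℕ → V)
    (hS1 : ∀ r ∈ Finset.Icc 1 σ, ∀ t ∈ Finset.Icc 1 σ, t < r →
      ∀ m : ℤ, -(p t : ℤ) ≤ m → m ≤ (p t : ℤ) - 2 → B (v r) ((T ^ m) (v t)) = 0)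
    (hS2 : ∀ r ∈ Finset.Icc 1 σ, ∀ m : ℤ, -(p r : ℤ) + 1 ≤ m → m ≤ (p r : ℤ) - 2 →
      B (v r) ((T ^ m) (v r)) = 0)
    (hS3 : ∀ r ∈ Finset.Icc 1 σ, B (v r) ((T ^ ((p r : ℤ) - 1)) (v r)) ≠ 0) :
    LinearIndependent 𝕜
      (fun kh : Σ k : Fin σ, Fin (2 * p (k.1 + 1) - 1) =>
        (T ^ ((kh.2 : ℤ) - (p (kh.1.1 + 1) : ℤ))) (v (kh.1.1 + 1))) ∧
    Submodule.span 𝕜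
      (Set.range (fun kh : Σ k : Fin σ, Fin (2 * p (k.1 + 1) - 1) =>
        (T ^ ((kh.2 : ℤ) - (p (kh.1.1 + 1) : ℤ))) (v (kh.1.1 + 1)))) = ⊤ := by
  have hp : AntitoneOn p (Set.Icc 1 σ) :=
    antitoneOn_of_add_one_le Set.ordConnected_Icc fun r _ hr hr' => hmono r hr.1 hr'.2
  have hli := SConditions.linearIndependent ⟨hS1, hS2, hS3⟩ hT hp
  refine ⟨hli, hli.span_eq_top_of_card_eq_finrank' ?_⟩
  rw [Fintype.card_sigma_fin_succ σ (fun r => 2 * p r - 1), hdimV, hn]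

/-- 4.8(a), case `q = 1`: if `v₁,…,v_σ` satisfy the 𝒮-conditions (with
`B(v_r, T^{p_r−1} v_r) ≠ 0`), then the `n` vectors `T^{h−p_k} v_k`
(`1 ≤ k ≤ σ`, `0 ≤ h ≤ 2p_k−2`) form a basis of `V`. -/
theorem S_conditions_family_is_basis
    (𝕜 : Type*) [Field 𝕜] [IsAlgClosed 𝕜]
    (V : Type*) [AddCommGroup V] [Module 𝕜 V] [FiniteDimensional 𝕜 V]
    (σ n : ℕ) (p : ℕ → ℕ)
    (hσ : 1 ≤ σ) (hn1 : 1 ≤ n)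
    (hp1 : ∀ r, 1 ≤ r → r ≤ σ → 1 ≤ p r)
    (hmono : ∀ r, 1 ≤ r → r < σ → p (r + 1) ≤ p r)
    (hn : n = ∑ r ∈ Finset.Icc 1 σ, (2 * p r - 1))
    (hdimV : finrank 𝕜 V = n)
    (B : V →ₗ[𝕜] V →ₗ[𝕜] 𝕜)
    (hBl : ∀ x, (∀ y, B x y = 0) → x = 0)
    (hBr : ∀ y, (∀ x, B x y = 0) → y = 0)
    (T : V ≃ₗ[𝕜] V)
    (hT : ∀ x y, B (T x) y = B y x)
    (v : ℕ → V)
    (hS1 : ∀ r ∈ Finset.Icc 1 σ, ∀ t ∈ Finset.Icc 1 σ, t < r →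
      ∀ m : ℤ, -(p t : ℤ) ≤ m → m ≤ (p t : ℤ) - 2 → B (v r) ((T ^ m) (v t)) = 0)
    (hS2 : ∀ r ∈ Finset.Icc 1 σ, ∀ m : ℤ, -(p r : ℤ) + 1 ≤ m → m ≤ (p r : ℤ) - 2 →
      B (v r) ((T ^ m) (v r)) = 0)
    (hS3 : ∀ r ∈ Finset.Icc 1 σ, B (v r) ((T ^ ((p r : ℤ) - 1)) (v r)) ≠ 0) :
    LinearIndependent 𝕜
      (fun kh : Σ k : Fin σ, Fin (2 * p (k.1 + 1) - 1) =>
        (T ^ ((kh.2 : ℤ) - (p (kh.1.1 + 1) : ℤ))) (v (kh.1.1 + 1))) ∧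
    Submodule.span 𝕜
      (Set.range (fun kh : Σ k : Fin σ, Fin (2 * p (k.1 + 1) - 1) =>
        (T ^ ((kh.2 : ℤ) - (p (kh.1.1 + 1) : ℤ))) (v (kh.1.1 + 1)))) = ⊤ :=
  S_conditions_family_is_basis_general 𝕜 V σ n p hmono hn hdimV B T hT v hS1 hS2 hS3
end

section
/- (5.2(a).) Suppose N := T − 1 is nilpotent and v_1, …, v_σ ∈ V satisfy the normalized 𝒮-conditions. Then for every k ≥ 1, dim N^k(V) ≥ Σ_{r=1}^{σ} max(2p_r − 1 − k, 0); equivalently, dim ker(N^k) ≤ Σ_{r=1}^{σ} min(k, 2p_r − 1). -/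
/-!
The vectors `N^k (T^x v_r)` with `N = T - 1`, `1 ≤ r ≤ σ` and `0 ≤ x < 2p_r - 1 - k` lie in
`N^k(V)`; they are linearly independent because pairing them with the vectors
`T^(x+k+1-p_r) v_r` gives a triangular matrix with unit diagonal. Indeed
`B (T^a y) (N^k (T^b z))` is the `k`-th forward difference of `m ↦ B y (T^m z)` at `b - a`, and the
𝒮-conditions make these values vanish on the relevant windows once the indices are ordered by `x`
first and by `r` decreasing second. The bound on `ker N^k` then follows from rank–nullity.
-/

open Module Function Finset OrderDual
open scoped fwdDiff

theorem linearIndependent_of_dual_triangular {R V ι α : Type*} [CommRing R] [IsDomain R]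
    [AddCommGroup V] [Module R V] [Fintype ι] [LinearOrder α] {key : ι → α}
    (hkey : Injective key) (ℓ : ι → Dual R V) (w : ι → V)
    (hzero : ∀ i j, key j < key i → ℓ i (w j) = 0) (hdiag : ∀ i, ℓ i (w i) ≠ 0) :
    LinearIndependent R w := by
  classical
  let _ : LinearOrder ι := LinearOrder.lift' key hkey
  let M : Matrix ι ι R := Matrix.of fun i j => ℓ i (w j)
  have hM : M.det ≠ 0 := by
    rw [Matrix.det_of_isUpperTriangular (M := M) fun i j h => hzero i j h]
    exact prod_ne_zero_iff.2 fun i _ => hdiag i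
  refine Fintype.linearIndependent_iff.2 fun g hg =>
    congrFun (Matrix.eq_zero_of_mulVec_eq_zero hM (funext fun i => ?_))
  simpa [M, Matrix.mulVec, dotProduct, mul_comm] using congrArg (ℓ i) hg

theorem fwdDiff_iter_eq_of_forall_eq_zero {G : Type*} [AddCommGroup G] {f : ℤ → G} {k : ℕ}
    {y : ℤ} (h : ∀ j < k, f (y + j) = 0) : Δ_[1] ^[k] f y = f (y + k) := by
  rw [fwdDiff_iter_eq_sum_shift, sum_range_succ, sum_eq_zero fun j hj => ?_]
  · simp
  · simp [h j (mem_range.1 hj)]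

theorem map_pow_sub_one_apply_eq_fwdDiff {K V M : Type*} [CommRing K] [AddCommGroup V]
    [Module K V] [AddCommGroup M] [Module K M] (T : V ≃ₗ[K] V) (ℓ : V →ₗ[K] M) (k : ℕ) (u : V) :
    ℓ ((((T : End K V) - 1) ^ k) u) = Δ_[1] ^[k] (fun m : ℤ => ℓ ((T ^ m) u)) 0 := by
  induction k generalizing u with
  | zero => simp
  | succ k ih =>
    have hshift : (fun m : ℤ => ℓ ((T ^ m) (((T : End K V) - 1) u))) =
        Δ_[1] (fun m : ℤ => ℓ ((T ^ m) u)) := by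
      funext m
      simp [fwdDiff, zpow_add_one]
    rw [pow_succ, Module.End.mul_apply, ih, hshift, iterate_succ_apply]

section Asymmetry

variable {K V : Type*} [CommRing K] [AddCommGroup V] [Module K V] {B : V →ₗ[K] V →ₗ[K] K}
  {T : V ≃ₗ[K] V}

theorem bilin_zpow_zpow_self (hT : ∀ x y, B (T x) y = B y x) (m : ℤ) (x y : V) :
    B ((T ^ m) x) ((T ^ m) y) = B x y := by
  have hiso : ∀ x y, B (T x) (T y) = B x y := fun x y => (hT x (T y)).trans (hT y x)
  induction m using Int.induction_on generalizing x y with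
  | zero => simp
  | succ i ih => rw [zpow_add_one, LinearEquiv.mul_apply, LinearEquiv.mul_apply, ih, hiso]
  | pred i ih =>
    rw [zpow_sub_one, LinearEquiv.mul_apply, LinearEquiv.mul_apply, ih, ← hiso]
    simp

theorem bilin_zpow_zpow (hT : ∀ x y, B (T x) y = B y x) (a b : ℤ) (x y : V) :
    B ((T ^ a) x) ((T ^ b) y) = B x ((T ^ (b - a)) y) := by
  rw [← bilin_zpow_zpow_self hT a x, ← LinearEquiv.mul_apply, ← zpow_add, add_sub_cancel]

theorem bilin_zpow_swap (hT : ∀ x y, B (T x) y = B y x) (m : ℤ) (x y : V) :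
    B x ((T ^ m) y) = B y ((T ^ (-1 - m)) x) := by
  calc B x ((T ^ m) y) = B (T (T.symm x)) ((T ^ m) y) := by rw [T.apply_symm_apply]
    _ = B ((T ^ m) y) ((T ^ (-1 : ℤ)) x) := by rw [hT, zpow_neg_one]; rfl
    _ = B y ((T ^ (-1 - m)) x) := bilin_zpow_zpow hT m (-1) y x

theorem bilin_zpow_pow_sub_one_zpow (hT : ∀ x y, B (T x) y = B y x) (k : ℕ) (a b : ℤ)
    (y z : V) :
    B ((T ^ a) y) ((((T : End K V) - 1) ^ k) ((T ^ b) z)) =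
      Δ_[1] ^[k] (fun m : ℤ => B y ((T ^ m) z)) (b - a) := by
  rw [map_pow_sub_one_apply_eq_fwdDiff, ← zero_add (b - a), ← fwdDiff_iter_comp_add]
  refine congrArg (fun f => Δ_[1] ^[k] f 0) (funext fun m => ?_)
  rw [← LinearEquiv.mul_apply, ← zpow_add, bilin_zpow_zpow hT, add_sub_assoc]

end Asymmetry

structure NormalizedSConditions {K V : Type*} [CommRing K] [AddCommGroup V] [Module K V]
    (B : V →ₗ[K] V →ₗ[K] K) (T : V ≃ₗ[K] V) (σ : ℕ) (p : ℕ → ℕ) (v : ℕ → V) : Prop where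
  cross : ∀ r ∈ Icc 1 σ, ∀ t ∈ Icc 1 σ, t < r →
    ∀ m : ℤ, -(p t : ℤ) ≤ m → m ≤ (p t : ℤ) - 2 → B (v r) ((T ^ m) (v t)) = 0
  self : ∀ r ∈ Icc 1 σ, ∀ m : ℤ, -(p r : ℤ) + 1 ≤ m → m ≤ (p r : ℤ) - 2 →
    B (v r) ((T ^ m) (v r)) = 0
  normalized : ∀ r ∈ Icc 1 σ, B (v r) ((T ^ ((p r : ℤ) - 1)) (v r)) = 1

namespace NormalizedSConditions

variable {K V : Type*} [CommRing K] [AddCommGroup V] [Module K V] {B : V →ₗ[K] V →ₗ[K] K}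
  {T : V ≃ₗ[K] V} {σ : ℕ} {p : ℕ → ℕ} {v : ℕ → V}

theorem bilin_zpow_eq_zero (hS : NormalizedSConditions B T σ p v)
    (hT : ∀ x y, B (T x) y = B y x) (hp : AntitoneOn p (Set.Icc 1 σ)) {r s : ℕ}
    (hr : r ∈ Icc 1 σ) (hs : s ∈ Icc 1 σ) {m : ℤ} (hlow : -(p s : ℤ) < m)
    (hhigh : m + 2 ≤ p s ∨ s < r ∧ m + 1 ≤ p s) : B (v s) ((T ^ m) (v r)) = 0 := by
  rcases lt_trichotomy r s with hrs | rfl | hsr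
  · have : p s ≤ p r := hp (by simpa using hr) (by simpa using hs) hrs.le
    exact hS.cross s hs r hr hrs m (by omega) (by omega)
  · exact hS.self r hr m (by omega) (by omega)
  · rw [bilin_zpow_swap hT]
    exact hS.cross r hr s hs hsr (-1 - m) (by omega) (by omega)

theorem bilin_pow_sub_one_eq_zero (hS : NormalizedSConditions B T σ p v)
    (hT : ∀ x y, B (T x) y = B y x) (hp : AntitoneOn p (Set.Icc 1 σ)) {k r s x x' : ℕ}
    (hr : r ∈ Icc 1 σ) (hs : s ∈ Icc 1 σ) (hx' : x' < 2 * p s - 1 - k)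
    (hlt : x < x' ∨ x = x' ∧ s < r) :
    B ((T ^ ((x' : ℤ) + k + 1 - p s)) (v s)) ((((T : End K V) - 1) ^ k) ((T ^ (x : ℤ)) (v r)))
      = 0 := by
  have hvanish : ∀ j ≤ k, B (v s) ((T ^ ((x : ℤ) - (x' + k + 1 - p s) + j)) (v r)) = 0 :=
    fun j hj => hS.bilin_zpow_eq_zero hT hp hr hs (by omega) (by omega)
  rw [bilin_zpow_pow_sub_one_zpow hT, fwdDiff_iter_eq_of_forall_eq_zero fun j hj =>
    hvanish j hj.le]
  exact hvanish k le_rfl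

theorem bilin_pow_sub_one_self (hS : NormalizedSConditions B T σ p v)
    (hT : ∀ x y, B (T x) y = B y x) {k r x : ℕ} (hr : r ∈ Icc 1 σ)
    (hx : x < 2 * p r - 1 - k) :
    B ((T ^ ((x : ℤ) + k + 1 - p r)) (v r)) ((((T : End K V) - 1) ^ k) ((T ^ (x : ℤ)) (v r)))
      = 1 := by
  rw [bilin_zpow_pow_sub_one_zpow hT, fwdDiff_iter_eq_of_forall_eq_zero fun j hj =>
    hS.self r hr _ (by omega) (by omega), ← hS.normalized r hr]
  congr 3
  ring

end NormalizedSConditions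

theorem NormalizedSConditions.sum_le_finrank_range_pow_sub_one {K V : Type*} [Field K]
    [AddCommGroup V] [Module K V] [FiniteDimensional K V] {B : V →ₗ[K] V →ₗ[K] K}
    {T : V ≃ₗ[K] V} {σ : ℕ} {p : ℕ → ℕ} {v : ℕ → V}
    (hS : NormalizedSConditions B T σ p v) (hT : ∀ x y, B (T x) y = B y x)
    (hp : AntitoneOn p (Set.Icc 1 σ)) (k : ℕ) :
    ∑ r ∈ Icc 1 σ, (2 * p r - 1 - k) ≤
      finrank K (LinearMap.range (((T : End K V) - 1) ^ k)) := by
  let ι := Σ r : Icc 1 σ, Fin (2 * p r - 1 - k)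
  let w : ι → V := fun i => (((T : End K V) - 1) ^ k) ((T ^ (i.2 : ℤ)) (v i.1))
  let ℓ : ι → Dual K V := fun i => B ((T ^ ((i.2 : ℤ) + k + 1 - p i.1)) (v i.1))
  have hkey : Injective fun i : ι => toLex ((i.2 : ℕ), toDual (i.1 : ℕ)) := by
    rintro ⟨r, x⟩ ⟨s, y⟩ h
    simp only [toLex_inj, Prod.mk.injEq, toDual_inj] at h
    obtain rfl : r = s := Subtype.ext h.2
    obtain rfl : x = y := Fin.ext h.1
    rfl
  have hw : LinearIndependent K w := by
    refine linearIndependent_of_dual_triangular hkey ℓ w (fun i j hij => ?_) fun i => ?_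
    · simp only [Prod.Lex.toLex_lt_toLex, toDual_lt_toDual] at hij
      exact hS.bilin_pow_sub_one_eq_zero hT hp j.1.2 i.1.2 i.2.2 hij
    · exact (hS.bilin_pow_sub_one_self hT i.1.2 i.2.2).trans_ne one_ne_zero
  calc ∑ r ∈ Icc 1 σ, (2 * p r - 1 - k) = Fintype.card ι := by
        simp only [ι, Fintype.card_sigma, Fintype.card_fin]
        exact (sum_coe_sort _ _).symm
    _ = finrank K (Submodule.span K (Set.range w)) := (finrank_span_eq_card hw).symm
    _ ≤ _ := Submodule.finrank_mono <| Submodule.span_le.2 <| Set.range_subset_iff.2 fun i =>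
      LinearMap.mem_range_self _ _

theorem rank_pow_ge_of_S_conditions_general
    (𝕜 : Type*) [Field 𝕜]
    (V : Type*) [AddCommGroup V] [Module 𝕜 V] [FiniteDimensional 𝕜 V]
    (σ n : ℕ) (p : ℕ → ℕ)
    (hmono : ∀ r, 1 ≤ r → r < σ → p (r + 1) ≤ p r)
    (hn : n = ∑ r ∈ Finset.Icc 1 σ, (2 * p r - 1))
    (hdimV : finrank 𝕜 V = n)
    (B : V →ₗ[𝕜] V →ₗ[𝕜] 𝕜)
    (T : V ≃ₗ[𝕜] V)
    (hT : ∀ x y, B (T x) y = B y x)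
    (v : ℕ → V)
    (hS1 : ∀ r ∈ Finset.Icc 1 σ, ∀ t ∈ Finset.Icc 1 σ, t < r →
      ∀ m : ℤ, -(p t : ℤ) ≤ m → m ≤ (p t : ℤ) - 2 → B (v r) ((T ^ m) (v t)) = 0)
    (hS2 : ∀ r ∈ Finset.Icc 1 σ, ∀ m : ℤ, -(p r : ℤ) + 1 ≤ m → m ≤ (p r : ℤ) - 2 →
      B (v r) ((T ^ m) (v r)) = 0)
    (hS3 : ∀ r ∈ Finset.Icc 1 σ, B (v r) ((T ^ ((p r : ℤ) - 1)) (v r)) = 1) :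
    (∀ k, 1 ≤ k →
      (∑ r ∈ Finset.Icc 1 σ, (2 * p r - 1 - k)) ≤
        finrank 𝕜 ↥(LinearMap.range (((T : Module.End 𝕜 V) - 1) ^ k))) ∧
    (∀ k, 1 ≤ k →
      finrank 𝕜 ↥(LinearMap.ker (((T : Module.End 𝕜 V) - 1) ^ k)) ≤
        ∑ r ∈ Finset.Icc 1 σ, min k (2 * p r - 1)) := by
  have hp : AntitoneOn p (Set.Icc 1 σ) := antitoneOn_of_succ_le Set.ordConnected_Icc
    fun r _ hr hr' => hmono r hr.1 (by simpa using hr'.2)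
  have hrange := NormalizedSConditions.sum_le_finrank_range_pow_sub_one ⟨hS1, hS2, hS3⟩ hT hp
  refine ⟨fun k _ => hrange k, fun k _ => ?_⟩
  have hsplit : ∑ r ∈ Icc 1 σ, (2 * p r - 1) ≤
      ∑ r ∈ Icc 1 σ, min k (2 * p r - 1) + ∑ r ∈ Icc 1 σ, (2 * p r - 1 - k) := by
    rw [← sum_add_distrib]
    exact sum_le_sum fun r _ => by omega
  have hrank := LinearMap.finrank_range_add_finrank_ker (((T : End 𝕜 V) - 1) ^ k)
  have hk := hrange k
  omega

/-- 5.2(a): if `N = T − 1` is nilpotent and `v₁,…,v_σ` satisfy the normalized 𝒮-conditions,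
then `dim N^k(V) ≥ Σ_r max(2p_r−1−k, 0)` for all `k ≥ 1`; equivalently
`dim ker(N^k) ≤ Σ_r min(k, 2p_r−1)`. -/
theorem rank_pow_ge_of_S_conditions
    (𝕜 : Type*) [Field 𝕜] [IsAlgClosed 𝕜]
    (V : Type*) [AddCommGroup V] [Module 𝕜 V] [FiniteDimensional 𝕜 V]
    (σ n : ℕ) (p : ℕ → ℕ)
    (hσ : 1 ≤ σ) (hn1 : 1 ≤ n)
    (hp1 : ∀ r, 1 ≤ r → r ≤ σ → 1 ≤ p r)
    (hmono : ∀ r, 1 ≤ r → r < σ → p (r + 1) ≤ p r)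
    (hn : n = ∑ r ∈ Finset.Icc 1 σ, (2 * p r - 1))
    (hdimV : finrank 𝕜 V = n)
    (B : V →ₗ[𝕜] V →ₗ[𝕜] 𝕜)
    (hBl : ∀ x, (∀ y, B x y = 0) → x = 0)
    (hBr : ∀ y, (∀ x, B x y = 0) → y = 0)
    (T : V ≃ₗ[𝕜] V)
    (hT : ∀ x y, B (T x) y = B y x)
    (hnil : IsNilpotent ((T : Module.End 𝕜 V) - 1))
    (v : ℕ → V)
    (hS1 : ∀ r ∈ Finset.Icc 1 σ, ∀ t ∈ Finset.Icc 1 σ, t < r →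
      ∀ m : ℤ, -(p t : ℤ) ≤ m → m ≤ (p t : ℤ) - 2 → B (v r) ((T ^ m) (v t)) = 0)
    (hS2 : ∀ r ∈ Finset.Icc 1 σ, ∀ m : ℤ, -(p r : ℤ) + 1 ≤ m → m ≤ (p r : ℤ) - 2 →
      B (v r) ((T ^ m) (v r)) = 0)
    (hS3 : ∀ r ∈ Finset.Icc 1 σ, B (v r) ((T ^ ((p r : ℤ) - 1)) (v r)) = 1) :
    (∀ k, 1 ≤ k →
      (∑ r ∈ Finset.Icc 1 σ, (2 * p r - 1 - k)) ≤
        finrank 𝕜 ↥(LinearMap.range (((T : Module.End 𝕜 V) - 1) ^ k))) ∧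
    (∀ k, 1 ≤ k →
      finrank 𝕜 ↥(LinearMap.ker (((T : Module.End 𝕜 V) - 1) ^ k)) ≤
        ∑ r ∈ Finset.Icc 1 σ, min k (2 * p r - 1)) :=
  rank_pow_ge_of_S_conditions_general 𝕜 V σ n p hmono hn hdimV B T hT v hS1 hS2 hS3
end

section
/- (§5.1 together with 5.3(a).) Let 𝕜 be an algebraically closed field, σ ≥ 1, and p_1 ≥ ⋯ ≥ p_σ ≥ 1 integers; set n = (2p_1−1)+⋯+(2p_σ−1) and let V be an n-dimensional 𝕜-vector space. Then there exist a nondegenerate bilinear form B on V — with T the linear automorphism determined by B(Tx,y) = B(y,x) — and vectors v_1,…,v_σ ∈ V such that: T is unipotent with dim ker((T−1)^k) = Σ_r min(k, 2p_r−1) for all k ≥ 0; the v_r satisfy the normalized 𝒮-conditions; and in addition, for every t ∈ {1,…,σ} there exists x ∈ V with (T−1)^{2p_t−1} x = 0 and B((T−1)^{p_t−1} x, (T−1)^{p_t−1} x) ≠ 0. -/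
/-!
Take `V` to be an orthogonal sum of blocks of dimensions `2 p_r - 1`, each with a basis
`e₀, …, e_{2p-2}` on which `T = 1 + S` is a single Jordan block (`S eᵢ = eᵢ₊₁`). On a block,
`B (T x) y = B y x` is the recursion `G i j + G (i+1) j = G j i` for the Gram matrix `G`, and it is
solved by `G i j = (-1)^i * choose (p - 1 - i) (2p - 2 - i - j)` with a generalized binomial
coefficient (upper index possibly negative), vanishing below the antidiagonal: this is Pascal's
rule combined with upper negation. `G` is `±1` on the antidiagonal, so `B` is nondegenerate. Row `0`
of `G` is the unit vector at `p - 1`, which together with `T^k e₀ = ∑ choose k j • e_j` gives the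
normalized `𝒮`-conditions for `v_r = e₀`; negative powers of `T` reduce to positive ones because
`T` is a `B`-isometry. Finally `B (S^{p-1} e₀, S^{p-1} e₀) = G (p-1) (p-1) = ±1`.
-/

open scoped Finset Matrix

namespace Cosquare

def gramCoeff (p i j : ℕ) : ℤ :=
  if i + j ≤ 2 * p - 2 then (-1) ^ i * Ring.choose ((p : ℤ) - 1 - i) (2 * p - 2 - i - j) else 0

lemma gramCoeff_of_lt {p i j : ℕ} (h : 2 * p - 2 < i + j) : gramCoeff p i j = 0 :=
  if_neg h.not_ge

lemma gramCoeff_of_add_eq {p i j : ℕ} (h : i + j = 2 * p - 2) : gramCoeff p i j = (-1) ^ i := by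
  rw [gramCoeff, if_pos h.le, show 2 * p - 2 - i - j = 0 by omega, Ring.choose_zero_right, mul_one]

lemma gramCoeff_zero_left {p j : ℕ} (hp : 1 ≤ p) (hj : j ≤ p - 1) :
    gramCoeff p 0 j = if j = p - 1 then 1 else 0 := by
  have hcast : (p : ℤ) - 1 - ((0 : ℕ) : ℤ) = ((p - 1 : ℕ) : ℤ) := by omega
  rw [gramCoeff, if_pos (by omega), pow_zero, one_mul, hcast, Ring.choose_natCast]
  split_ifs with h
  · rw [h, show 2 * p - 2 - 0 - (p - 1) = p - 1 by omega, Nat.choose_self, Nat.cast_one]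
  · rw [Nat.choose_eq_zero_of_lt (by omega), Nat.cast_zero]

theorem gramCoeff_add_gramCoeff_succ (p i j : ℕ) :
    gramCoeff p i j + gramCoeff p (i + 1) j = gramCoeff p j i := by
  rcases lt_trichotomy (i + j) (2 * p - 2) with h | h | h
  · obtain ⟨d, hd⟩ : ∃ d, 2 * p - 2 - i - j = d + 1 := ⟨2 * p - 2 - i - j - 1, by omega⟩
    rw [gramCoeff, gramCoeff, gramCoeff, if_pos h.le, if_pos (by omega), if_pos (by omega),
      hd, show 2 * p - 2 - (i + 1) - j = d by omega, show 2 * p - 2 - j - i = d + 1 by omega]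
    -- Pascal's rule leaves `(-1)^i * choose (p - 2 - i) (d + 1)`, and upper negation turns
    -- `choose (p - 2 - i) (d + 1)` into `(-1)^(d + 1) * choose (p - 1 - j) (d + 1)`.
    have hpascal := Ring.choose_succ_succ ((p : ℤ) - 1 - (i + 1 : ℕ)) d
    have hneg := Ring.choose_neg ((i : ℤ) + 2 - p) (d + 1)
    rw [show (p : ℤ) - 1 - ((i + 1 : ℕ) : ℤ) + 1 = (p : ℤ) - 1 - i by push_cast; ring] at hpascal
    rw [show -((i : ℤ) + 2 - p) = (p : ℤ) - 1 - ((i + 1 : ℕ) : ℤ) by push_cast; ring,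
      show (i : ℤ) + 2 - p + ((d + 1 : ℕ) : ℤ) - 1 = (p : ℤ) - 1 - j by omega,
      Units.smul_def, Int.coe_negOnePow_natCast, smul_eq_mul] at hneg
    have hsign : ((-1 : ℤ)) ^ j = (-1) ^ i * (-1) ^ (d + 1) := by
      rw [← pow_add]
      exact neg_one_pow_congr (by simp only [Nat.even_iff]; omega)
    rw [hpascal, hneg, hsign]
    ring
  · rw [gramCoeff_of_add_eq h, gramCoeff_of_lt (by omega), gramCoeff_of_add_eq (by omega),
      add_zero]
    exact neg_one_pow_congr (by simp only [Nat.even_iff]; omega)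
  · rw [gramCoeff_of_lt h, gramCoeff_of_lt (by omega), gramCoeff_of_lt (by omega), add_zero]

section Block

variable (R : Type*) [CommRing R]

def shiftMatrix (m : ℕ) : Matrix (Fin m) (Fin m) R :=
  Matrix.of fun i j => if (i : ℕ) = j + 1 then 1 else 0

def gram (p : ℕ) : Matrix (Fin (2 * p - 1)) (Fin (2 * p - 1)) R :=
  Matrix.of fun i j => (gramCoeff p i j : R)

variable {R}

lemma shiftMatrix_apply {m : ℕ} (i j : Fin m) :
    shiftMatrix R m i j = if (i : ℕ) = j + 1 then 1 else 0 := rfl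

lemma gram_apply (p : ℕ) (i j : Fin (2 * p - 1)) : gram R p i j = gramCoeff p i j := rfl

lemma shiftMatrix_pow_apply {m : ℕ} (k : ℕ) (i j : Fin m) :
    (shiftMatrix R m ^ k) i j = if (i : ℕ) = j + k then 1 else 0 := by
  induction k generalizing i j with
  | zero => simp [Matrix.one_apply, Fin.ext_iff]
  | succ k ih =>
    rw [pow_succ, Matrix.mul_apply]
    simp only [ih, shiftMatrix_apply, mul_ite, mul_one, mul_zero]
    rw [Fin.sum_univ_eq_sum_range (fun l => if l = j + 1 then if (i : ℕ) = l + k then 1 else 0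
      else 0) m, Finset.sum_ite_eq']
    simp only [Finset.mem_range]
    split_ifs <;> first | rfl | (exfalso; omega)

lemma shiftMatrix_pow_self (m : ℕ) : shiftMatrix R m ^ m = 0 := by
  ext i j
  rw [shiftMatrix_pow_apply, if_neg (by omega), Matrix.zero_apply]

lemma one_add_shiftMatrix_pow_apply_zero {m : ℕ} (hm : 0 < m) (k : ℕ) (i : Fin m) :
    ((1 + shiftMatrix R m) ^ k) i ⟨0, hm⟩ = (k.choose i : R) := by
  rw [add_comm, (Commute.one_right _).add_pow', Matrix.sum_apply,
    Finset.Nat.sum_antidiagonal_eq_sum_range_succ_mk]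
  simp only [one_pow, mul_one, Matrix.smul_apply, shiftMatrix_pow_apply, zero_add, nsmul_eq_mul,
    mul_ite, mul_zero]
  rw [Finset.sum_ite_eq]
  split_ifs with h
  · rfl
  · rw [Finset.mem_range] at h
    rw [Nat.choose_eq_zero_of_lt (by omega), Nat.cast_zero]

theorem transpose_one_add_shiftMatrix_mul_gram (p : ℕ) :
    (1 + shiftMatrix R (2 * p - 1))ᵀ * gram R p = (gram R p)ᵀ := by
  ext i j
  simp only [Matrix.mul_apply, Matrix.transpose_apply, Matrix.add_apply, Matrix.one_apply,
    shiftMatrix_apply, gram_apply, add_mul, ite_mul, one_mul, zero_mul, Finset.sum_add_distrib,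
    Finset.sum_ite_eq', Finset.mem_univ, if_true]
  rw [Fin.sum_univ_eq_sum_range (fun l => if l = (i : ℕ) + 1 then (gramCoeff p l j : R) else 0),
    Finset.sum_ite_eq', ← gramCoeff_add_gramCoeff_succ p i j, Int.cast_add]
  split_ifs with h
  · rfl
  · rw [Finset.mem_range] at h
    rw [gramCoeff_of_lt (i := i + 1) (by omega), Int.cast_zero]

theorem isUnit_det_gram (p : ℕ) : IsUnit (gram R p).det := by
  have htri : ((gram R p).submatrix id Fin.revPerm).IsUpperTriangular := by
    intro i j hij
    simp only [Matrix.submatrix_apply, id, Fin.revPerm_apply, gram_apply, Fin.val_rev]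
    rw [gramCoeff_of_lt (by simp only [id] at hij; omega), Int.cast_zero]
  have hrev : IsUnit ((gram R p).submatrix id Fin.revPerm).det := by
    rw [Matrix.det_of_isUpperTriangular htri, IsUnit.prod_univ_iff]
    intro i
    simp only [Matrix.submatrix_apply, id, Fin.revPerm_apply, gram_apply, Fin.val_rev]
    rw [gramCoeff_of_add_eq (by omega)]
    push_cast
    exact isUnit_neg_one.pow _
  rw [Matrix.det_permute'] at hrev
  exact isUnit_of_mul_isUnit_right hrev

theorem gram_mul_one_add_shiftMatrix_pow_apply_zero {p : ℕ} (hp : 1 ≤ p) {k : ℕ}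
    (hk : k ≤ p - 1) :
    (gram R p * (1 + shiftMatrix R (2 * p - 1)) ^ k) ⟨0, by omega⟩ ⟨0, by omega⟩ =
      if k = p - 1 then 1 else 0 := by
  simp only [Matrix.mul_apply, gram_apply, one_add_shiftMatrix_pow_apply_zero]
  rw [Fin.sum_univ_eq_sum_range (fun j => (gramCoeff p 0 j : R) * (k.choose j : R)),
    Finset.sum_eq_single (p - 1)]
  · rw [gramCoeff_zero_left hp le_rfl, if_pos rfl, Int.cast_one, one_mul]
    split_ifs with h
    · rw [h, Nat.choose_self, Nat.cast_one]
    · rw [Nat.choose_eq_zero_of_lt (by omega), Nat.cast_zero]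
  · intro j _ hj
    rcases lt_or_gt_of_ne hj with hj | hj
    · rw [gramCoeff_zero_left hp hj.le, if_neg hj.ne, Int.cast_zero, zero_mul]
    · rw [Nat.choose_eq_zero_of_lt (by omega), Nat.cast_zero, mul_zero]
  · intro h
    rw [Finset.mem_range] at h
    omega

end Block

section BlockDiagonal

variable {R : Type*} [CommRing R] {κ : Type*} [DecidableEq κ]

variable (R) in
def blockShift (m : κ → ℕ) : Matrix (Σ r, Fin (m r)) (Σ r, Fin (m r)) R :=
  Matrix.blockDiagonal' fun r => shiftMatrix R (m r)

variable (R) in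
def blockGram (p : κ → ℕ) : Matrix (Σ r, Fin (2 * p r - 1)) (Σ r, Fin (2 * p r - 1)) R :=
  Matrix.blockDiagonal' fun r => gram R (p r)

lemma one_add_blockShift (m : κ → ℕ) :
    1 + blockShift R m = Matrix.blockDiagonal' fun r => 1 + shiftMatrix R (m r) := by
  rw [blockShift, ← Matrix.blockDiagonal'_one, ← Matrix.blockDiagonal'_add]
  rfl

variable [Fintype κ]

lemma blockShift_pow_apply (m : κ → ℕ) (k : ℕ) (a c : Σ r, Fin (m r)) :
    (blockShift R m ^ k) a c = if a.1 = c.1 ∧ (a.2 : ℕ) = c.2 + k then 1 else 0 := by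
  obtain ⟨r, i⟩ := a
  obtain ⟨t, j⟩ := c
  rw [blockShift, ← Matrix.blockDiagonal'_pow]
  by_cases hrt : r = t
  · subst hrt
    simp [shiftMatrix_pow_apply]
  · rw [Matrix.blockDiagonal'_apply_ne _ _ _ hrt, if_neg fun h => hrt h.1]

theorem blockShift_pow_mulVec_eq_zero_iff (m : κ → ℕ) (k : ℕ) (x : (Σ r, Fin (m r)) → R) :
    blockShift R m ^ k *ᵥ x = 0 ↔ ∀ c : Σ r, Fin (m r), (c.2 : ℕ) + k < m c.1 → x c = 0 := by
  constructor
  · rintro h ⟨r, i⟩ hi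
    have hc := congrFun h ⟨r, ⟨i + k, hi⟩⟩
    rwa [Matrix.mulVec, dotProduct, Finset.sum_eq_single ⟨r, i⟩, blockShift_pow_apply,
      if_pos ⟨rfl, rfl⟩, one_mul] at hc
    · rintro ⟨t, j⟩ - hne
      rw [blockShift_pow_apply, if_neg, zero_mul]
      rintro ⟨rfl, hj⟩
      simp only at hj
      exact hne (by rw [show j = i from Fin.ext (by omega)])
    · simp
  · intro h
    funext a
    refine Finset.sum_eq_zero fun c _ => ?_
    dsimp only
    rw [blockShift_pow_apply]
    split_ifs with hac
    · obtain ⟨r, i⟩ := a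
      obtain ⟨t, j⟩ := c
      obtain ⟨rfl, hi⟩ := hac
      simp only at hi
      rw [h ⟨r, j⟩ (by simp only; omega), mul_zero]
    · rw [zero_mul]

lemma card_filter_not_add_lt (n k : ℕ) : #{i : Fin n | ¬ (i : ℕ) + k < n} = min k n := by
  have hsplit := Finset.card_filter_add_card_filter_not (s := Finset.univ)
    (fun i : Fin n => (i : ℕ) + k < n)
  have hlt : #{i : Fin n | (i : ℕ) + k < n} = #{i : Fin n | (i : ℕ) < n - k} := by
    congr 1
    ext i
    simp only [Finset.mem_filter, Finset.mem_univ, true_and]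
    omega
  rw [hlt, Fin.card_filter_val_lt, Finset.card_univ, Fintype.card_fin] at hsplit
  omega

theorem finrank_ker_blockShift_pow [Nontrivial R] (m : κ → ℕ) (k : ℕ) :
    Module.finrank R (LinearMap.ker (blockShift R m ^ k).mulVecLin) = ∑ r, min k (m r) := by
  let free : Set (Σ r, Fin (m r)) := {c | ¬ (c.2 : ℕ) + k < m c.1}
  have hker : LinearMap.ker (blockShift R m ^ k).mulVecLin =
      ⨅ c ∈ freeᶜ, LinearMap.ker (LinearMap.proj c) := by
    ext x
    simp [Submodule.mem_iInf, blockShift_pow_mulVec_eq_zero_iff, free]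
  rw [hker, LinearEquiv.finrank_eq (LinearMap.iInfKerProjEquiv R (fun _ => R)
    disjoint_compl_right (by simp)), Module.finrank_fintype_fun_eq_card, Fintype.card_subtype,
    Finset.card_filter, Fintype.sum_sigma]
  refine Finset.sum_congr rfl fun r _ => ?_
  rw [← card_filter_not_add_lt, Finset.card_filter]
  rfl

theorem toLin_blockShift_pow_self {M : Type*} [AddCommGroup M] [Module R M] (m : κ → ℕ)
    (b : Module.Basis (Σ r, Fin (m r)) R M) (k : ℕ) (c : Σ r, Fin (m r)) :
    Matrix.toLin b b (blockShift R m ^ k) (b c) =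
      if h : (c.2 : ℕ) + k < m c.1 then b ⟨c.1, ⟨c.2 + k, h⟩⟩ else 0 := by
  rw [Matrix.toLin_self]
  split_ifs with h
  · rw [Finset.sum_eq_single ⟨c.1, ⟨c.2 + k, h⟩⟩, blockShift_pow_apply, if_pos ⟨rfl, rfl⟩,
      one_smul]
    · rintro ⟨t, j⟩ - hne
      rw [blockShift_pow_apply, if_neg, zero_smul]
      rintro ⟨rfl, hj⟩
      exact hne (by rw [show j = ⟨c.2 + k, h⟩ from Fin.ext hj])
    · simp
  · refine Finset.sum_eq_zero fun a _ => ?_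
    rw [blockShift_pow_apply, if_neg, zero_smul]
    obtain ⟨t, j⟩ := a
    obtain ⟨r, i⟩ := c
    rintro ⟨rfl, hj⟩
    simp only at hj h
    have := j.isLt
    omega

theorem transpose_one_add_blockShift_mul_blockGram (p : κ → ℕ) :
    (1 + blockShift R (fun r => 2 * p r - 1))ᵀ * blockGram R p = (blockGram R p)ᵀ := by
  rw [one_add_blockShift, blockGram, Matrix.blockDiagonal'_transpose,
    Matrix.blockDiagonal'_transpose, ← Matrix.blockDiagonal'_mul]
  congr 1
  funext r
  exact transpose_one_add_shiftMatrix_mul_gram (p r)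

theorem blockGram_mul_one_add_blockShift_pow (p : κ → ℕ) (k : ℕ) :
    blockGram R p * (1 + blockShift R (fun r => 2 * p r - 1)) ^ k =
      Matrix.blockDiagonal' fun r => gram R (p r) * (1 + shiftMatrix R (2 * p r - 1)) ^ k := by
  rw [one_add_blockShift, ← Matrix.blockDiagonal'_pow, blockGram, ← Matrix.blockDiagonal'_mul]
  rfl

theorem isUnit_blockGram (p : κ → ℕ) : IsUnit (blockGram R p) :=
  (Pi.isUnit_iff.mpr fun r => (Matrix.isUnit_iff_isUnit_det _).mpr (isUnit_det_gram (p r))).map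
    (Matrix.blockDiagonal'RingHom _ R)

theorem isUnit_one_add_blockShift (m : κ → ℕ) : IsUnit (1 + blockShift R m) := by
  rw [one_add_blockShift]
  exact (Pi.isUnit_iff.mpr fun r => IsNilpotent.isUnit_one_add ⟨m r, shiftMatrix_pow_self _⟩).map
    (Matrix.blockDiagonal'RingHom _ R)

end BlockDiagonal

section Basis

variable {R ι M : Type*} [CommRing R] [Fintype ι] [DecidableEq ι] [AddCommGroup M] [Module R M]
  (b : Module.Basis ι R M)

theorem toLinearMap₂_self_toLin_self (J A : Matrix ι ι R) (i j : ι) :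
    Matrix.toLinearMap₂ b b J (b i) (Matrix.toLin b b A (b j)) = (J * A) i j := by
  rw [Matrix.toLin_self, map_sum, Matrix.mul_apply]
  refine Finset.sum_congr rfl fun l _ => ?_
  rw [map_smul, Matrix.toLinearMap₂_apply_basis, smul_eq_mul, mul_comm]

theorem toLinearMap₂_toLin_apply_eq_flip {J A : Matrix ι ι R} (h : Aᵀ * J = Jᵀ) (x y : M) :
    Matrix.toLinearMap₂ b b J (Matrix.toLin b b A x) y = Matrix.toLinearMap₂ b b J y x := by
  have key : (Matrix.toLinearMap₂ b b J).compl₁₂ (Matrix.toLin b b A) (Matrix.toLin b b 1) =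
      (Matrix.toLinearMap₂ b b J).flip := by
    rw [Matrix.toLinearMap₂_compl₁₂, mul_one, h]
    exact LinearMap.ext_basis b b fun i j => by
      rw [LinearMap.flip_apply, Matrix.toLinearMap₂_apply_basis, Matrix.toLinearMap₂_apply_basis,
        Matrix.transpose_apply]
  simpa [Matrix.toLin_one] using LinearMap.congr_fun₂ key x y

theorem finrank_ker_toLin (A : Matrix ι ι R) :
    Module.finrank R (LinearMap.ker (Matrix.toLin b b A)) =
      Module.finrank R (LinearMap.ker A.mulVecLin) := by
  have hker : LinearMap.ker (Matrix.toLin b b A) =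
      (LinearMap.ker A.mulVecLin).comap (b.equivFun : M →ₗ[R] ι → R) := by
    ext x
    simp [Matrix.toLin_apply_eq_zero_iff, funext_iff]
  rw [hker, Submodule.comap_equiv_eq_map_symm, LinearEquiv.finrank_map_eq]

theorem toLinearEquiv_pow_apply (A : Matrix ι ι R) (hA : IsUnit A.det) (k : ℕ) (x : M) :
    (Matrix.toLinearEquiv b A hA ^ k) x = Matrix.toLin b b (A ^ k) x := by
  rw [LinearEquiv.pow_apply, Matrix.toLin_pow, Module.End.pow_apply]
  rfl

theorem toLinearEquiv_sub_one_pow (A : Matrix ι ι R) (hA : IsUnit A.det) (k : ℕ) :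
    ((Matrix.toLinearEquiv b A hA : Module.End R M) - 1) ^ k = Matrix.toLin b b ((A - 1) ^ k) := by
  have hcoe : (Matrix.toLinearEquiv b A hA : Module.End R M) = Matrix.toLin b b A := rfl
  rw [hcoe, Matrix.toLin_pow, map_sub, Matrix.toLin_one, Module.End.one_eq_id]

end Basis

section IsCosquare

variable {R M : Type*} [CommRing R] [AddCommGroup M] [Module R M]

/-- `T` is the cosquare of `B`; for `B x y = (x, g y)` it is the paper's `g^{*2}` (case `q = 1`). -/
def IsCosquare (B : M →ₗ[R] M →ₗ[R] R) (T : M ≃ₗ[R] M) : Prop :=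
  ∀ x y, B (T x) y = B y x

namespace IsCosquare

variable {B : M →ₗ[R] M →ₗ[R] R} {T : M ≃ₗ[R] M}

theorem apply_pow_apply_pow (hT : IsCosquare B T) (k : ℕ) (x y : M) :
    B ((T ^ k) x) ((T ^ k) y) = B x y := by
  induction k with
  | zero => rfl
  | succ k ih => rw [pow_succ', LinearEquiv.mul_apply, LinearEquiv.mul_apply, hT, hT, ih]

theorem apply_zpow_negSucc (hT : IsCosquare B T) (k : ℕ) (x y : M) :
    B x ((T ^ Int.negSucc k) y) = B y ((T ^ k) x) := by
  rw [zpow_negSucc]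
  calc B x ((T ^ (k + 1))⁻¹ y)
      = B ((T ^ (k + 1)) x) ((T ^ (k + 1)) ((T ^ (k + 1))⁻¹ y)) :=
        (hT.apply_pow_apply_pow (k + 1) _ _).symm
    _ = B ((T ^ (k + 1)) x) y := by rw [← LinearEquiv.mul_apply, mul_inv_cancel]; rfl
    _ = B y ((T ^ k) x) := by rw [pow_succ', LinearEquiv.mul_apply, hT]

theorem apply_zpow_eq_zero (hT : IsCosquare B T) {x y : M} (hxy : ∀ k : ℕ, B x ((T ^ k) y) = 0)
    (hyx : ∀ k : ℕ, B y ((T ^ k) x) = 0) (m : ℤ) : B x ((T ^ m) y) = 0 := by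
  rcases m with k | k
  · exact hxy k
  · rw [hT.apply_zpow_negSucc]
    exact hyx k

theorem apply_zpow_self_eq_zero (hT : IsCosquare B T) {x : M} {n : ℕ}
    (hx : ∀ k : ℕ, k + 2 ≤ n → B x ((T ^ k) x) = 0) {m : ℤ} (h₁ : -(n : ℤ) + 1 ≤ m)
    (h₂ : m ≤ n - 2) : B x ((T ^ m) x) = 0 := by
  rcases m with k | k
  · rw [Int.ofNat_eq_natCast] at h₂
    exact hx k (by omega)
  · rw [hT.apply_zpow_negSucc]
    exact hx k (by rw [Int.negSucc_eq] at h₁; omega)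

end IsCosquare

end IsCosquare

section Model

variable {𝕜 V κ : Type*} [Field 𝕜] [AddCommGroup V] [Module 𝕜 V] [Fintype κ] [DecidableEq κ]
  {p : κ → ℕ} (b : Module.Basis (Σ r, Fin (2 * p r - 1)) 𝕜 V)

noncomputable def modelForm : V →ₗ[𝕜] V →ₗ[𝕜] 𝕜 :=
  Matrix.toLinearMap₂ b b (blockGram 𝕜 p)

noncomputable def modelUnipotent : V ≃ₗ[𝕜] V :=
  Matrix.toLinearEquiv b (1 + blockShift 𝕜 fun r => 2 * p r - 1)
    ((Matrix.isUnit_iff_isUnit_det _).mp (isUnit_one_add_blockShift _))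

theorem isCosquare_modelUnipotent : IsCosquare (modelForm b) (modelUnipotent b) :=
  toLinearMap₂_toLin_apply_eq_flip b (transpose_one_add_blockShift_mul_blockGram p)

theorem separatingLeft_modelForm : (modelForm b).SeparatingLeft := by
  rw [modelForm, Matrix.separatingLeft_toLinearMap₂_iff, Matrix.separatingLeft_iff_det_ne_zero]
  exact ((Matrix.isUnit_iff_isUnit_det _).mp (isUnit_blockGram p)).ne_zero

theorem separatingRight_modelForm : (modelForm b).SeparatingRight := by
  rw [modelForm, Matrix.separatingRight_toLinearMap₂_iff, Matrix.separatingRight_iff_det_ne_zero]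
  exact ((Matrix.isUnit_iff_isUnit_det _).mp (isUnit_blockGram p)).ne_zero

theorem modelUnipotent_sub_one_pow (k : ℕ) :
    ((modelUnipotent b : Module.End 𝕜 V) - 1) ^ k =
      Matrix.toLin b b (blockShift 𝕜 (fun r => 2 * p r - 1) ^ k) := by
  rw [modelUnipotent, toLinearEquiv_sub_one_pow, add_sub_cancel_left]

theorem finrank_ker_modelUnipotent_sub_one_pow (k : ℕ) :
    Module.finrank 𝕜 (LinearMap.ker (((modelUnipotent b : Module.End 𝕜 V) - 1) ^ k)) =
      ∑ r, min k (2 * p r - 1) := by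
  rw [modelUnipotent_sub_one_pow, finrank_ker_toLin, finrank_ker_blockShift_pow]

theorem modelForm_modelUnipotent_pow_of_ne {r t : κ} (hrt : r ≠ t) (i j) (k : ℕ) :
    modelForm b (b ⟨r, i⟩) ((modelUnipotent b ^ k) (b ⟨t, j⟩)) = 0 := by
  rw [modelForm, modelUnipotent, toLinearEquiv_pow_apply, toLinearMap₂_self_toLin_self,
    blockGram_mul_one_add_blockShift_pow, Matrix.blockDiagonal'_apply_ne _ _ _ hrt]

theorem modelForm_modelUnipotent_pow_self {r : κ} (hr : 1 ≤ p r) {k : ℕ} (hk : k ≤ p r - 1) :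
    modelForm b (b ⟨r, ⟨0, by omega⟩⟩) ((modelUnipotent b ^ k) (b ⟨r, ⟨0, by omega⟩⟩)) =
      if k = p r - 1 then 1 else 0 := by
  rw [modelForm, modelUnipotent, toLinearEquiv_pow_apply, toLinearMap₂_self_toLin_self,
    blockGram_mul_one_add_blockShift_pow, Matrix.blockDiagonal'_apply_eq,
    gram_mul_one_add_shiftMatrix_pow_apply_zero hr hk]

theorem modelForm_modelUnipotent_zpow_of_ne {r t : κ} (hrt : r ≠ t) (i j) (m : ℤ) :
    modelForm b (b ⟨r, i⟩) ((modelUnipotent b ^ m) (b ⟨t, j⟩)) = 0 :=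
  (isCosquare_modelUnipotent b).apply_zpow_eq_zero
    (modelForm_modelUnipotent_pow_of_ne b hrt i j)
    (modelForm_modelUnipotent_pow_of_ne b hrt.symm j i) m

theorem modelForm_modelUnipotent_zpow_self_eq_zero {r : κ} (hr : 1 ≤ p r) {m : ℤ}
    (h₁ : -(p r : ℤ) + 1 ≤ m) (h₂ : m ≤ (p r : ℤ) - 2) :
    modelForm b (b ⟨r, ⟨0, by omega⟩⟩) ((modelUnipotent b ^ m) (b ⟨r, ⟨0, by omega⟩⟩)) = 0 := by
  refine (isCosquare_modelUnipotent b).apply_zpow_self_eq_zero (fun k hk => ?_) h₁ h₂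
  rw [modelForm_modelUnipotent_pow_self b hr (by omega), if_neg (by omega)]

theorem modelForm_modelUnipotent_zpow_pred_self {r : κ} (hr : 1 ≤ p r) :
    modelForm b (b ⟨r, ⟨0, by omega⟩⟩)
      ((modelUnipotent b ^ ((p r : ℤ) - 1)) (b ⟨r, ⟨0, by omega⟩⟩)) = 1 := by
  rw [show (p r : ℤ) - 1 = ((p r - 1 : ℕ) : ℤ) by omega, zpow_natCast,
    modelForm_modelUnipotent_pow_self b hr le_rfl, if_pos rfl]

theorem modelUnipotent_sub_one_pow_self_eq_zero {r : κ} (hr : 1 ≤ p r) :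
    (((modelUnipotent b : Module.End 𝕜 V) - 1) ^ (2 * p r - 1)) (b ⟨r, ⟨0, by omega⟩⟩) = 0 := by
  rw [modelUnipotent_sub_one_pow, toLin_blockShift_pow_self, dif_neg (by simp)]

theorem modelForm_modelUnipotent_sub_one_pow_pred {r : κ} (hr : 1 ≤ p r) :
    modelForm b ((((modelUnipotent b : Module.End 𝕜 V) - 1) ^ (p r - 1)) (b ⟨r, ⟨0, by omega⟩⟩))
      ((((modelUnipotent b : Module.End 𝕜 V) - 1) ^ (p r - 1)) (b ⟨r, ⟨0, by omega⟩⟩)) =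
      (-1) ^ (p r - 1) := by
  rw [modelUnipotent_sub_one_pow, toLin_blockShift_pow_self, dif_pos (by simp only; omega),
    modelForm, Matrix.toLinearMap₂_apply_basis, blockGram, Matrix.blockDiagonal'_apply_eq,
    gram_apply, gramCoeff_of_add_eq (by simp only; omega)]
  push_cast [zero_add]
  rfl

end Model

end Cosquare

open Module

theorem exists_bilinear_form_unipotent_with_S_conditions_and_eps_one_general
    (𝕜 : Type*) [Field 𝕜]
    (V : Type*) [AddCommGroup V] [Module 𝕜 V] [FiniteDimensional 𝕜 V]
    (σ n : ℕ) (p : ℕ → ℕ)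
    (hp1 : ∀ r, 1 ≤ r → r ≤ σ → 1 ≤ p r)
    (hn : n = ∑ r ∈ Finset.Icc 1 σ, (2 * p r - 1))
    (hdimV : finrank 𝕜 V = n) :
    ∃ B : V →ₗ[𝕜] V →ₗ[𝕜] 𝕜, ∃ T : V ≃ₗ[𝕜] V, ∃ v : ℕ → V,
      (∀ x, (∀ y, B x y = 0) → x = 0) ∧
      (∀ y, (∀ x, B x y = 0) → y = 0) ∧
      (∀ x y, B (T x) y = B y x) ∧
      (∀ k : ℕ, finrank 𝕜 ↥(LinearMap.ker (((T : Module.End 𝕜 V) - 1) ^ k)) =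
        ∑ r ∈ Finset.Icc 1 σ, min k (2 * p r - 1)) ∧
      (∀ r ∈ Finset.Icc 1 σ, ∀ t ∈ Finset.Icc 1 σ, t < r →
        ∀ m : ℤ, -(p t : ℤ) ≤ m → m ≤ (p t : ℤ) - 2 → B (v r) ((T ^ m) (v t)) = 0) ∧
      (∀ r ∈ Finset.Icc 1 σ, ∀ m : ℤ, -(p r : ℤ) + 1 ≤ m → m ≤ (p r : ℤ) - 2 →
        B (v r) ((T ^ m) (v r)) = 0) ∧
      (∀ r ∈ Finset.Icc 1 σ, B (v r) ((T ^ ((p r : ℤ) - 1)) (v r)) = 1) ∧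
      (∀ t ∈ Finset.Icc 1 σ, ∃ x : V,
        (((T : Module.End 𝕜 V) - 1) ^ (2 * p t - 1)) x = 0 ∧
        B ((((T : Module.End 𝕜 V) - 1) ^ (p t - 1)) x)
          ((((T : Module.End 𝕜 V) - 1) ^ (p t - 1)) x) ≠ 0) := by
  have hp : ∀ r : Finset.Icc 1 σ, 1 ≤ p r := fun r =>
    hp1 r (Finset.mem_Icc.1 r.2).1 (Finset.mem_Icc.1 r.2).2
  have hcard : Fintype.card (Σ r : Finset.Icc 1 σ, Fin (2 * p r - 1)) = finrank 𝕜 V := by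
    rw [Fintype.card_sigma, hdimV, hn]
    simp only [Fintype.card_fin]
    exact Finset.sum_coe_sort _ fun r => 2 * p r - 1
  let b := (Module.finBasisOfFinrankEq 𝕜 V hcard.symm).reindex (Fintype.equivFin _).symm
  let v : ℕ → V := fun r =>
    if h : r ∈ Finset.Icc 1 σ then b ⟨⟨r, h⟩, ⟨0, by have := hp ⟨r, h⟩; omega⟩⟩ else 0
  have hv : ∀ r (hr : r ∈ Finset.Icc 1 σ), v r = b ⟨⟨r, hr⟩, ⟨0, by have := hp ⟨r, hr⟩; omega⟩⟩ :=
    fun r hr => dif_pos hr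
  refine ⟨Cosquare.modelForm b, Cosquare.modelUnipotent b, v, Cosquare.separatingLeft_modelForm b,
    Cosquare.separatingRight_modelForm b, Cosquare.isCosquare_modelUnipotent b, fun k => ?_,
    fun r hr t ht htr m _ _ => ?_, fun r hr m h₁ h₂ => ?_, fun r hr => ?_, fun t ht => ?_⟩
  · rw [Cosquare.finrank_ker_modelUnipotent_sub_one_pow, ← Finset.sum_coe_sort (Finset.Icc 1 σ)]
  · rw [hv r hr, hv t ht]
    exact Cosquare.modelForm_modelUnipotent_zpow_of_ne b
      (fun h => htr.ne' (congrArg Subtype.val h)) _ _ m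
  · rw [hv r hr]
    exact Cosquare.modelForm_modelUnipotent_zpow_self_eq_zero b (hp _) h₁ h₂
  · rw [hv r hr]
    exact Cosquare.modelForm_modelUnipotent_zpow_pred_self b (hp _)
  · refine ⟨_, Cosquare.modelUnipotent_sub_one_pow_self_eq_zero b (hp ⟨t, ht⟩), ?_⟩
    rw [Cosquare.modelForm_modelUnipotent_sub_one_pow_pred b (hp ⟨t, ht⟩)]
    exact pow_ne_zero _ (neg_ne_zero.mpr one_ne_zero)

/-- §5.1 together with 5.3(a): as in 5.1 there exist `B`, `T` (unipotent of Jordan type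
`(2p₁−1,…,2p_σ−1)`) and `v₁,…,v_σ` satisfying the normalized 𝒮-conditions, and moreover for
every `t` there is `x` with `(T−1)^{2p_t−1} x = 0` and
`B((T−1)^{p_t−1} x, (T−1)^{p_t−1} x) ≠ 0`. -/
theorem exists_bilinear_form_unipotent_with_S_conditions_and_eps_one
    (𝕜 : Type*) [Field 𝕜] [IsAlgClosed 𝕜]
    (V : Type*) [AddCommGroup V] [Module 𝕜 V] [FiniteDimensional 𝕜 V]
    (σ n : ℕ) (p : ℕ → ℕ)
    (hσ : 1 ≤ σ) (hn1 : 1 ≤ n)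
    (hp1 : ∀ r, 1 ≤ r → r ≤ σ → 1 ≤ p r)
    (hmono : ∀ r, 1 ≤ r → r < σ → p (r + 1) ≤ p r)
    (hn : n = ∑ r ∈ Finset.Icc 1 σ, (2 * p r - 1))
    (hdimV : finrank 𝕜 V = n) :
    ∃ B : V →ₗ[𝕜] V →ₗ[𝕜] 𝕜, ∃ T : V ≃ₗ[𝕜] V, ∃ v : ℕ → V,
      (∀ x, (∀ y, B x y = 0) → x = 0) ∧
      (∀ y, (∀ x, B x y = 0) → y = 0) ∧
      (∀ x y, B (T x) y = B y x) ∧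
      (∀ k : ℕ, finrank 𝕜 ↥(LinearMap.ker (((T : Module.End 𝕜 V) - 1) ^ k)) =
        ∑ r ∈ Finset.Icc 1 σ, min k (2 * p r - 1)) ∧
      (∀ r ∈ Finset.Icc 1 σ, ∀ t ∈ Finset.Icc 1 σ, t < r →
        ∀ m : ℤ, -(p t : ℤ) ≤ m → m ≤ (p t : ℤ) - 2 → B (v r) ((T ^ m) (v t)) = 0) ∧
      (∀ r ∈ Finset.Icc 1 σ, ∀ m : ℤ, -(p r : ℤ) + 1 ≤ m → m ≤ (p r : ℤ) - 2 →
        B (v r) ((T ^ m) (v r)) = 0) ∧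
      (∀ r ∈ Finset.Icc 1 σ, B (v r) ((T ^ ((p r : ℤ) - 1)) (v r)) = 1) ∧
      (∀ t ∈ Finset.Icc 1 σ, ∃ x : V,
        (((T : Module.End 𝕜 V) - 1) ^ (2 * p t - 1)) x = 0 ∧
        B ((((T : Module.End 𝕜 V) - 1) ^ (p t - 1)) x)
          ((((T : Module.End 𝕜 V) - 1) ^ (p t - 1)) x) ≠ 0) :=
  exists_bilinear_form_unipotent_with_S_conditions_and_eps_one_general 𝕜 V σ n p hp1 hn hdimV
end

section
/- (3.6(a).) Let 𝕜 be an algebraically closed field of characteristic 2 and V a 𝕜-vector space of dimension 2n with n ≥ 2. Let Q : V → 𝕜 be a quadratic form whose polar form ⟨x,y⟩ = Q(x+y) + Q(x) + Q(y) is nondegenerate. Let σ be an odd positive integer and p_1 ≥ ⋯ ≥ p_σ ≥ 1 integers with p_1+⋯+p_σ = n. Let g : V → V be a bijective linear map with Q(g x) = Q(x) for all x. Suppose v_1, …, v_σ ∈ V are nonzero vectors such that for every r ∈ {1,…,σ}: (i) ⟨g^i v_t, v_r⟩ = 0 for all t < r and all integers i with −p_t ≤ i ≤ p_t − 1; (ii)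 ⟨v_r, g^i v_r⟩ = 0 for all i with −p_r + 1 ≤ i ≤ p_r − 1, and Q(v_r) = 0; (iii) ⟨v_r, g^{p_r} v_r⟩ ≠ 0. Then the 2n vectors g^{−p_t+i} v_t, for t ∈ {1,…,σ} and 0 ≤ i ≤ 2p_t − 1, form a basis of V. -/
/-!
Pair the vector `g^(i-p_t) v_t` with `w_{t,i} = g^(i-2p_t) v_t` through the polar form, which is
symmetric and `g`-invariant. Conditions (i)–(iii), together with `p` being non-increasing, make
this pairing matrix triangular for the lexicographic order on `(2p_t - i, t)`, with diagonal entries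
`⟨v_t, g^(p_t) v_t⟩ ≠ 0`. So the `∑ 2p_t = 2n = dim V` vectors are linearly independent, hence a
basis.
-/

open Module

theorem linearIndependent_of_dual_triangular_s15 {ι α R M : Type*} [CommRing R] [NoZeroDivisors R]
    [AddCommGroup M] [Module R M] [Preorder α] [WellFoundedLT α]
    (u : ι → M) (f : ι → Dual R M) (μ : ι → α) (hdiag : ∀ i, f i (u i) ≠ 0)
    (htri : ∀ i j, j ≠ i → f i (u j) ≠ 0 → μ j < μ i) :
    LinearIndependent R u := by
  rw [linearIndependent_iff']
  intro s c hc i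
  induction i using (InvImage.wf μ wellFounded_lt).induction with
  | _ i ih =>
    intro hi
    have hpair : ∑ j ∈ s, c j * f i (u j) = 0 := by simpa using congr(f i $hc)
    rw [Finset.sum_eq_single_of_mem i hi] at hpair
    · exact (mul_eq_zero.mp hpair).resolve_right (hdiag i)
    · intro j hj hji
      by_cases h : f i (u j) = 0
      · rw [h, mul_zero]
      · rw [ih j (htri i j hji h) hj, zero_mul]

namespace LinearMap.IsOrthogonal

variable {R M : Type*} [CommRing R] [AddCommGroup M] [Module R M]
  {B : LinearMap.BilinForm R M} {g : M ≃ₗ[R] M}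

theorem pow (hg : B.IsOrthogonal g) (n : ℕ) : B.IsOrthogonal ⇑(g ^ n) := by
  induction n with
  | zero => intro x y; rfl
  | succ n ih => intro x y; rw [pow_succ, LinearEquiv.mul_apply, LinearEquiv.mul_apply, ih, hg]

theorem zpow (hg : B.IsOrthogonal g) (k : ℤ) : B.IsOrthogonal ⇑(g ^ k) := by
  obtain ⟨n, rfl | rfl⟩ := Int.eq_nat_or_neg k
  · simpa using hg.pow n
  · intro x y
    rw [← hg.pow n ((g ^ (-(n : ℤ))) x), ← zpow_natCast, ← LinearEquiv.mul_apply,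
      ← LinearEquiv.mul_apply, ← zpow_add, add_neg_cancel, zpow_zero]
    rfl

theorem apply_zpow_apply_zpow (hg : B.IsOrthogonal g) (a b : ℤ) (x y : M) :
    B ((g ^ a) x) ((g ^ b) y) = B ((g ^ (a - b)) x) y := by
  rw [← hg.zpow b ((g ^ (a - b)) x) y, ← LinearEquiv.mul_apply, ← zpow_add, add_sub_cancel]

theorem apply_zpow_right (hg : B.IsOrthogonal g) (b : ℤ) (x y : M) :
    B x ((g ^ b) y) = B ((g ^ (-b)) x) y := by
  simpa using hg.apply_zpow_apply_zpow 0 b x y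

end LinearMap.IsOrthogonal

section

variable {R M ι : Type*} [CommRing R] [AddCommGroup M] [Module R M] [LinearOrder ι]
  {B : LinearMap.BilinForm R M} {g : M ≃ₗ[R] M} {p : ι → ℕ} {v : ι → M}

theorem lt_of_apply_zpow_apply_ne_zero (hB : B.IsSymm) (hg : B.IsOrthogonal g) (hp : Antitone p)
    (hcross : ∀ t r, t < r → ∀ i : ℤ, -(p t : ℤ) ≤ i → i ≤ p t - 1 →
      B ((g ^ i) (v t)) (v r) = 0)
    (hself : ∀ r, ∀ i : ℤ, -(p r : ℤ) + 1 ≤ i → i ≤ p r - 1 →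
      B (v r) ((g ^ i) (v r)) = 0)
    {s t : ι} {i j : ℕ} (hi : i < 2 * p t) (hne : s = t → j ≠ i)
    (hnz : B ((g ^ ((j : ℤ) - p s - ((i : ℤ) - 2 * p t))) (v s)) (v t) ≠ 0) :
    toLex (2 * p s - j, s) < toLex (2 * p t - i, t) := by
  rw [Prod.Lex.toLex_lt_toLex]
  rcases lt_trichotomy s t with hst | rfl | hts
  · suffices 2 * p s - j ≤ 2 * p t - i from
      this.lt_or_eq.imp id fun h => ⟨h, hst⟩
    by_contra! hlt
    exact hnz (hcross s t hst _ (by omega) (by omega))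
  · have hji := hne rfl
    refine Or.inl ?_
    by_contra! hle
    exact hnz (by rw [hB.eq]; exact hself s _ (by omega) (by omega))
  · have hpst : p s ≤ p t := hp hts.le
    refine Or.inl ?_
    by_contra! hle
    exact hnz (by rw [hB.eq, hg.apply_zpow_right]; exact hcross t s hts _ (by omega) (by omega))

theorem linearIndependent_sigma_zpow_apply [WellFoundedLT ι] [NoZeroDivisors R]
    (hB : B.IsSymm) (hg : B.IsOrthogonal g) (hp : Antitone p)
    (hcross : ∀ t r, t < r → ∀ i : ℤ, -(p t : ℤ) ≤ i → i ≤ p t - 1 →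
      B ((g ^ i) (v t)) (v r) = 0)
    (hself : ∀ r, ∀ i : ℤ, -(p r : ℤ) + 1 ≤ i → i ≤ p r - 1 →
      B (v r) ((g ^ i) (v r)) = 0)
    (hdiag : ∀ r, B (v r) ((g ^ (p r : ℤ)) (v r)) ≠ 0) :
    LinearIndependent R (fun x : Σ t, Fin (2 * p t) => (g ^ ((x.2 : ℤ) - p x.1)) (v x.1)) := by
  refine linearIndependent_of_dual_triangular_s15 _
    (fun x => LinearMap.flip B ((g ^ ((x.2 : ℤ) - 2 * p x.1)) (v x.1)))
    (fun x => toLex (2 * p x.1 - x.2, x.1)) ?_ ?_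
  · rintro ⟨t, i⟩
    dsimp only
    rw [LinearMap.flip_apply, hg.apply_zpow_apply_zpow, hB.eq]
    convert hdiag t using 4
    ring
  · rintro ⟨t, i⟩ ⟨s, j⟩ hne hnz
    dsimp only at hnz ⊢
    rw [LinearMap.flip_apply, hg.apply_zpow_apply_zpow] at hnz
    refine lt_of_apply_zpow_apply_ne_zero hB hg hp hcross hself i.2 ?_ hnz
    rintro rfl hji
    exact hne (by rw [Fin.ext hji])

end

namespace QuadraticMap

variable {R M : Type*} [CommRing R] [AddCommGroup M] [Module R M] (Q : QuadraticForm R M)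

theorem polar_eq_add_add_of_charTwo [CharP R 2] (x y : M) :
    polar Q x y = Q (x + y) + Q x + Q y := by
  rw [polar, CharTwo.sub_eq_add, CharTwo.sub_eq_add]

theorem isSymm_polarBilin : LinearMap.BilinForm.IsSymm Q.polarBilin :=
  ⟨polar_comm Q⟩

theorem isOrthogonal_polarBilin {g : M →ₗ[R] M} (hg : ∀ x, Q (g x) = Q x) :
    Q.polarBilin.IsOrthogonal g := fun x y => by
  simp only [polarBilin_apply_apply, polar, ← map_add, hg]

end QuadraticMap

theorem Sg_family_is_basis_general
    (𝕜 : Type*) [Field 𝕜] [CharP 𝕜 2]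
    (V : Type*) [AddCommGroup V] [Module 𝕜 V] [FiniteDimensional 𝕜 V]
    (n : ℕ) (hdimV : finrank 𝕜 V = 2 * n)
    (Q : QuadraticForm 𝕜 V)
    (σ : ℕ)
    (p : ℕ → ℕ)
    (hmono : ∀ r, 1 ≤ r → r < σ → p (r + 1) ≤ p r)
    (hpn : (∑ r ∈ Finset.Icc 1 σ, p r) = n)
    (g : V ≃ₗ[𝕜] V)
    (hg : ∀ x : V, Q (g x) = Q x)
    (v : ℕ → V)
    (hv1 : ∀ r ∈ Finset.Icc 1 σ, ∀ t ∈ Finset.Icc 1 σ, t < r →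
      ∀ i : ℤ, -(p t : ℤ) ≤ i → i ≤ (p t : ℤ) - 1 →
        Q ((g ^ i) (v t) + v r) + Q ((g ^ i) (v t)) + Q (v r) = 0)
    (hv2 : ∀ r ∈ Finset.Icc 1 σ, ∀ i : ℤ, -(p r : ℤ) + 1 ≤ i → i ≤ (p r : ℤ) - 1 →
        Q (v r + (g ^ i) (v r)) + Q (v r) + Q ((g ^ i) (v r)) = 0)
    (hv3 : ∀ r ∈ Finset.Icc 1 σ,
      Q (v r + (g ^ (p r : ℤ)) (v r)) + Q (v r) + Q ((g ^ (p r : ℤ)) (v r)) ≠ 0) :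
    LinearIndependent 𝕜
      (fun ti : Σ t : Fin σ, Fin (2 * p (t.1 + 1)) =>
        (g ^ ((ti.2 : ℤ) - (p (ti.1.1 + 1) : ℤ))) (v (ti.1.1 + 1))) ∧
    Submodule.span 𝕜
      (Set.range (fun ti : Σ t : Fin σ, Fin (2 * p (t.1 + 1)) =>
        (g ^ ((ti.2 : ℤ) - (p (ti.1.1 + 1) : ℤ))) (v (ti.1.1 + 1)))) = ⊤ := by
  have hpolar := Q.polar_eq_add_add_of_charTwo
  have hmem (t : Fin σ) : t.1 + 1 ∈ Finset.Icc 1 σ := Finset.mem_Icc.2 ⟨by omega, t.2⟩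
  have hanti : AntitoneOn p (Set.Icc 1 σ) :=
    antitoneOn_of_add_one_le Set.ordConnected_Icc fun r _ hr hr' => hmono r hr.1 hr'.2
  have hli := linearIndependent_sigma_zpow_apply (B := Q.polarBilin) (g := g)
    (p := fun t : Fin σ => p (t.1 + 1)) (v := fun t => v (t.1 + 1))
    Q.isSymm_polarBilin (Q.isOrthogonal_polarBilin hg)
    (fun s t hst => hanti (by simp) (by simp) (by simpa using hst))
    (fun t r htr i hi hi' =>
      (hpolar _ _).trans (hv1 _ (hmem r) _ (hmem t) (by simpa using htr) i hi hi'))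
    (fun r i hi hi' => (hpolar _ _).trans (hv2 _ (hmem r) i hi hi'))
    (fun r => (hpolar _ _).trans_ne (hv3 _ (hmem r)))
  refine ⟨hli, hli.span_eq_top_of_card_eq_finrank' ?_⟩
  rw [Fintype.card_sigma, hdimV, ← hpn, Finset.mul_sum]
  simp only [Fintype.card_fin]
  rw [Fin.sum_univ_eq_sum_range (fun k => 2 * p (k + 1)), Finset.range_eq_Ico,
    Finset.sum_Ico_add' (fun k => 2 * p k),
    Finset.Ico_add_one_right_eq_Icc, zero_add]

/-- 3.6(a): in characteristic 2, with `Q` a quadratic form on a `2n`-dimensional space with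
nondegenerate polar form `⟨x,y⟩ = Q(x+y)+Q(x)+Q(y)`, `g` an isometry of `Q` and `v₁,…,v_σ`
nonzero vectors satisfying the conditions of `𝒮_g`, the `2n` vectors `g^{−p_t+i} v_t`
(`1 ≤ t ≤ σ`, `0 ≤ i ≤ 2p_t−1`) form a basis of `V`. -/
theorem Sg_family_is_basis
    (𝕜 : Type*) [Field 𝕜] [IsAlgClosed 𝕜] [CharP 𝕜 2]
    (V : Type*) [AddCommGroup V] [Module 𝕜 V] [FiniteDimensional 𝕜 V]
    (n : ℕ) (hn : 2 ≤ n) (hdimV : finrank 𝕜 V = 2 * n)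
    (Q : QuadraticForm 𝕜 V)
    (hQnd : ∀ x : V, (∀ y : V, Q (x + y) + Q x + Q y = 0) → x = 0)
    (σ : ℕ) (hσ : 1 ≤ σ) (hσodd : Odd σ)
    (p : ℕ → ℕ)
    (hp1 : ∀ r, 1 ≤ r → r ≤ σ → 1 ≤ p r)
    (hmono : ∀ r, 1 ≤ r → r < σ → p (r + 1) ≤ p r)
    (hpn : (∑ r ∈ Finset.Icc 1 σ, p r) = n)
    (g : V ≃ₗ[𝕜] V)
    (hg : ∀ x : V, Q (g x) = Q x)
    (v : ℕ → V)
    (hv0 : ∀ r ∈ Finset.Icc 1 σ, v r ≠ 0)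
    (hv1 : ∀ r ∈ Finset.Icc 1 σ, ∀ t ∈ Finset.Icc 1 σ, t < r →
      ∀ i : ℤ, -(p t : ℤ) ≤ i → i ≤ (p t : ℤ) - 1 →
        Q ((g ^ i) (v t) + v r) + Q ((g ^ i) (v t)) + Q (v r) = 0)
    (hv2 : ∀ r ∈ Finset.Icc 1 σ, ∀ i : ℤ, -(p r : ℤ) + 1 ≤ i → i ≤ (p r : ℤ) - 1 →
        Q (v r + (g ^ i) (v r)) + Q (v r) + Q ((g ^ i) (v r)) = 0)
    (hv2' : ∀ r ∈ Finset.Icc 1 σ, Q (v r) = 0)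
    (hv3 : ∀ r ∈ Finset.Icc 1 σ,
      Q (v r + (g ^ (p r : ℤ)) (v r)) + Q (v r) + Q ((g ^ (p r : ℤ)) (v r)) ≠ 0) :
    LinearIndependent 𝕜
      (fun ti : Σ t : Fin σ, Fin (2 * p (t.1 + 1)) =>
        (g ^ ((ti.2 : ℤ) - (p (ti.1.1 + 1) : ℤ))) (v (ti.1.1 + 1))) ∧
    Submodule.span 𝕜
      (Set.range (fun ti : Σ t : Fin σ, Fin (2 * p (t.1 + 1)) =>
        (g ^ ((ti.2 : ℤ) - (p (ti.1.1 + 1) : ℤ))) (v (ti.1.1 + 1)))) = ⊤ :=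
  Sg_family_is_basis_general 𝕜 V n hdimV Q σ p hmono hpn g hg v hv1 hv2 hv3
end

section
/- (4.8(a), case q > 1: the Frobenius-sesquilinear version.) Let p be a prime, 𝕜 an algebraically closed field of characteristic p, e ≥ 1 an integer and q = p^e. Let V be a 𝕜-vector space of finite dimension n, fix σ ≥ 1 and integers p_1 ≥ ⋯ ≥ p_σ ≥ 1 with (2p_1−1)+⋯+(2p_σ−1) = n. Let B : V × V → 𝕜 be additive in each variable with B(λx, y) = λ·B(x,y) and B(x, λy) = λ^q·B(x,y) for all λ ∈ 𝕜, and nondegenerate (B(x,·) = 0 implies x = 0, and B(·,y) = 0 implies y = 0). Let T : V → V be an additive bijection with T(λx) = λ^{q²}·T(x) for all λ ∈ 𝕜 and B(T x, y) = B(y, x)^q for all x, y. Suppose v_1, …, v_σ ∈ V satisfy: B(v_r, T^k v_t) = 0 for all t < r and −p_t ≤ k ≤ p_t − 2; B(v_r, T^k v_r) = 0 for −p_r + 1 ≤ k ≤ p_r − 2; and B(v_r, T^{p_r−1} v_r) ≠ 0, for every r ∈ {1,…,σ} (T^k for k < 0 meaning iterates of T^{−1}). Then the n vectors T^{h−p_k}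 v_k, for k ∈ {1,…,σ} and 0 ≤ h ≤ 2p_k − 2, form a 𝕜-basis of V. -/
open Module Function

/-!
Test the vectors `F(t, h) = T^{h - p_t} v_t` against the linear forms `B(·, T^{h - 1} v_t)`.
Since `B(T^a x, T^c y) = 0 ↔ B(x, T^{c - a} y) = 0` and `B(x, T^m y) = 0 ↔ B(y, T^{-m-1} x) = 0`,
the 𝒮-conditions make the resulting square matrix upper triangular for the lexicographic order
on `(h - p_t, -t)`, with diagonal entries `B(v_t, T^{p_t - 1} v_t) ≠ 0`; that `p` is
non-increasing keeps the off-diagonal exponents inside the ranges where the conditions apply.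
Hence the `n = dim V` vectors are linearly independent.
-/

theorem linearIndependent_of_dual_triangular_s18 {K V ι : Type*} [Ring K] [NoZeroDivisors K]
    [AddCommGroup V] [Module K V] [LinearOrder ι] [Finite ι] {F : ι → V} (f : ι → Dual K V)
    (h_upper : ∀ i j, i < j → f i (F j) = 0) (h_diag : ∀ i, f i (F i) ≠ 0) :
    LinearIndependent K F := by
  have := Fintype.ofFinite ι
  rw [Fintype.linearIndependent_iff]
  intro g hg i
  induction i using WellFoundedLT.induction with
  | ind i ih =>
    have hfi : ∑ j, g j * f i (F j) = 0 := by simpa using congr_arg (f i) hg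
    rw [Fintype.sum_eq_single i fun j hji => ?_] at hfi
    · exact (mul_eq_zero.mp hfi).resolve_right (h_diag i)
    · rcases hji.lt_or_gt with hj | hj
      · rw [ih j hj, zero_mul]
      · rw [h_upper i j hj, mul_zero]

theorem AddAut.add_zsmul_apply {V : Type*} [AddCommGroup V] (T : AddAut V) (a b : ℤ) (x : V) :
    ((a + b) • T) x = (a • T) ((b • T) x) := by
  rw [add_zsmul, AddAut.add_apply]

section FormZeroes

variable {R V : Type*} [Zero R] [AddCommGroup V] {B : V → V → R} {T : AddAut V}

theorem zsmul_apply_zsmul_apply_eq_zero_iff (hT : ∀ x y, B (T x) y = 0 ↔ B y x = 0) (a : ℤ)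
    (x y : V) : B ((a • T) x) ((a • T) y) = 0 ↔ B x y = 0 := by
  have hT2 : ∀ x y, B (T x) (T y) = 0 ↔ B x y = 0 := fun x y => by rw [hT, hT]
  induction a using Int.induction_on generalizing x y with
  | zero => simp
  | succ a ih =>
    rw [AddAut.add_zsmul_apply, AddAut.add_zsmul_apply, one_zsmul]
    exact (ih _ _).trans (hT2 x y)
  | pred a ih =>
    rw [sub_eq_add_neg, AddAut.add_zsmul_apply, AddAut.add_zsmul_apply, neg_one_zsmul]
    refine (ih _ _).trans ?_
    rw [← hT2, AddAut.apply_neg_self, AddAut.apply_neg_self]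

theorem zsmul_apply_zsmul_apply_eq_zero_iff_sub (hT : ∀ x y, B (T x) y = 0 ↔ B y x = 0)
    (a c : ℤ) (x y : V) : B ((a • T) x) ((c • T) y) = 0 ↔ B x (((c - a) • T) y) = 0 := by
  rw [← zsmul_apply_zsmul_apply_eq_zero_iff hT a x (((c - a) • T) y), ← AddAut.add_zsmul_apply,
    add_sub_cancel]

theorem apply_zsmul_apply_eq_zero_comm (hT : ∀ x y, B (T x) y = 0 ↔ B y x = 0) (m : ℤ)
    (x y : V) : B x ((m • T) y) = 0 ↔ B y (((-m - 1) • T) x) = 0 := by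
  have h := zsmul_apply_zsmul_apply_eq_zero_iff_sub hT (1 + m) 0 y x
  rwa [zero_zsmul, AddAut.zero_apply, AddAut.add_zsmul_apply, one_zsmul, hT, zero_sub,
    show -(1 + m) = -m - 1 by ring] at h

end FormZeroes

def blockKey (p : ℕ → ℕ) (t h : ℕ) : ℤ ×ₗ ℤ :=
  toLex ((h : ℤ) - p t, -(t : ℤ))

theorem blockKey_sigma_injective {σ : ℕ} (p : ℕ → ℕ) (n : Fin σ → ℕ) :
    Injective fun kh : Σ k : Fin σ, Fin (n k) => blockKey p (kh.1.1 + 1) kh.2 := by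
  rintro ⟨k, h⟩ ⟨k', h'⟩ hkey
  simp only [blockKey, toLex_inj, Prod.mk.injEq] at hkey
  obtain rfl : k = k' := Fin.ext (by omega)
  obtain rfl : h = h' := Fin.ext (by omega)
  rfl

section SConditions

variable {R V : Type*} [Zero R] [AddCommGroup V] {B : V → V → R} {T : AddAut V} {v : ℕ → V}
  {p : ℕ → ℕ} {σ : ℕ}

theorem pairing_eq_zero_of_blockKey_lt (hT : ∀ x y, B (T x) y = 0 ↔ B y x = 0)
    (hanti : AntitoneOn p (Set.Icc 1 σ))
    (hS1 : ∀ r ∈ Finset.Icc 1 σ, ∀ t ∈ Finset.Icc 1 σ, t < r →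
      ∀ m : ℤ, -(p t : ℤ) ≤ m → m ≤ (p t : ℤ) - 2 → B (v r) ((m • T) (v t)) = 0)
    (hS2 : ∀ r ∈ Finset.Icc 1 σ, ∀ m : ℤ, -(p r : ℤ) + 1 ≤ m → m ≤ (p r : ℤ) - 2 →
      B (v r) ((m • T) (v r)) = 0)
    {t u h h' : ℕ} (ht : t ∈ Finset.Icc 1 σ) (hu : u ∈ Finset.Icc 1 σ) (hh' : h' < 2 * p u - 1)
    (hlt : blockKey p t h < blockKey p u h') :
    B ((((h' : ℤ) - p u) • T) (v u)) ((((h : ℤ) - 1) • T) (v t)) = 0 := by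
  rw [zsmul_apply_zsmul_apply_eq_zero_iff_sub hT]
  rw [blockKey, blockKey, Prod.Lex.toLex_lt_toLex] at hlt
  have ht' := Finset.mem_Icc.mp ht
  have hu' := Finset.mem_Icc.mp hu
  rcases lt_trichotomy t u with htu | rfl | htu
  · have hpu : p u ≤ p t := hanti ht' hu' htu.le
    exact hS1 u hu t ht htu _ (by omega) (by omega)
  · exact hS2 t ht _ (by omega) (by omega)
  · have hpt : p t ≤ p u := hanti hu' ht' htu.le
    rw [apply_zsmul_apply_eq_zero_comm hT]
    exact hS1 t ht u hu htu _ (by omega) (by omega)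

theorem pairing_self_ne_zero (hT : ∀ x y, B (T x) y = 0 ↔ B y x = 0)
    (hS3 : ∀ r ∈ Finset.Icc 1 σ, B (v r) ((((p r : ℤ) - 1) • T) (v r)) ≠ 0)
    {t : ℕ} (ht : t ∈ Finset.Icc 1 σ) (h : ℕ) :
    B ((((h : ℤ) - p t) • T) (v t)) ((((h : ℤ) - 1) • T) (v t)) ≠ 0 := by
  rw [ne_eq, zsmul_apply_zsmul_apply_eq_zero_iff_sub hT, sub_sub_sub_cancel_left]
  exact hS3 t ht

end SConditions

theorem S_conditions_family_is_basis_frobenius_general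
    (prime q e : ℕ) [Fact (Nat.Prime prime)] (hq : q = prime ^ e)
    (𝕜 : Type*) [Field 𝕜]
    (V : Type*) [AddCommGroup V] [Module 𝕜 V] [FiniteDimensional 𝕜 V]
    (σ n : ℕ) (p : ℕ → ℕ)
    (hmono : ∀ r, 1 ≤ r → r < σ → p (r + 1) ≤ p r)
    (hn : n = ∑ r ∈ Finset.Icc 1 σ, (2 * p r - 1))
    (hdimV : finrank 𝕜 V = n)
    (B : V → V → 𝕜)
    (hBaddl : ∀ x x' y, B (x + x') y = B x y + B x' y)
    (hBsmull : ∀ (l : 𝕜) x y, B (l • x) y = l * B x y)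
    (T : AddAut V)
    (hT : ∀ x y, B (T x) y = (B y x) ^ q)
    (v : ℕ → V)
    (hS1 : ∀ r ∈ Finset.Icc 1 σ, ∀ t ∈ Finset.Icc 1 σ, t < r →
      ∀ m : ℤ, -(p t : ℤ) ≤ m → m ≤ (p t : ℤ) - 2 → B (v r) ((m • T) (v t)) = 0)
    (hS2 : ∀ r ∈ Finset.Icc 1 σ, ∀ m : ℤ, -(p r : ℤ) + 1 ≤ m → m ≤ (p r : ℤ) - 2 →
      B (v r) ((m • T) (v r)) = 0)
    (hS3 : ∀ r ∈ Finset.Icc 1 σ, B (v r) ((((p r : ℤ) - 1) • T) (v r)) ≠ 0) :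
    LinearIndependent 𝕜
      (fun kh : Σ k : Fin σ, Fin (2 * p (k.1 + 1) - 1) =>
        (((kh.2 : ℤ) - (p (kh.1.1 + 1) : ℤ)) • T) (v (kh.1.1 + 1))) ∧
    Submodule.span 𝕜
      (Set.range (fun kh : Σ k : Fin σ, Fin (2 * p (k.1 + 1) - 1) =>
        (((kh.2 : ℤ) - (p (kh.1.1 + 1) : ℤ)) • T) (v (kh.1.1 + 1)))) = ⊤ := by
  have hq0 : q ≠ 0 := hq ▸ pow_ne_zero e (Fact.out : prime.Prime).ne_zero
  have hT0 : ∀ x y, B (T x) y = 0 ↔ B y x = 0 := fun x y => by rw [hT, pow_eq_zero_iff hq0]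
  have hanti : AntitoneOn p (Set.Icc 1 σ) :=
    antitoneOn_of_succ_le Set.ordConnected_Icc fun r _ hr hr' =>
      hmono r hr.1 (by simpa using hr'.2)
  have hmem : ∀ k : Fin σ, k.1 + 1 ∈ Finset.Icc 1 σ := fun k => Finset.mem_Icc.mpr ⟨by omega, k.2⟩
  let ι := Σ k : Fin σ, Fin (2 * p (k.1 + 1) - 1)
  let _ : LinearOrder ι := LinearOrder.lift' _ (blockKey_sigma_injective p _)
  have hLI := linearIndependent_of_dual_triangular_s18 (ι := ι)
    (F := fun kh => (((kh.2 : ℤ) - (p (kh.1.1 + 1) : ℤ)) • T) (v (kh.1.1 + 1)))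
    (fun kh => IsLinearMap.mk' (B · (((((kh.2 : ℕ) : ℤ) - 1) • T) (v (kh.1.1 + 1))))
      ⟨fun x x' => hBaddl x x' _, fun l x => hBsmull l x _⟩)
    (fun i j hij =>
      pairing_eq_zero_of_blockKey_lt hT0 hanti hS1 hS2 (hmem i.1) (hmem j.1) j.2.2 hij)
    (fun i => pairing_self_ne_zero hT0 hS3 (hmem i.1) i.2)
  have hcard : Fintype.card ι = finrank 𝕜 V := by
    rw [hdimV, hn, Fintype.card_sigma]
    simp only [Fintype.card_fin]
    rw [Fin.sum_univ_eq_sum_range (fun k => 2 * p (k + 1) - 1), Finset.range_eq_Ico,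
      Finset.sum_Ico_add' (fun r => 2 * p r - 1), zero_add, Finset.Ico_add_one_right_eq_Icc]
  exact ⟨hLI, hLI.span_eq_top_of_card_eq_finrank' hcard⟩

/-- 4.8(a), case `q > 1` (Frobenius-sesquilinear version): over an algebraically closed field of
characteristic `p` with `q = p^e`, let `B` be a nondegenerate biadditive form, linear in the
first variable and `q`-semilinear in the second, and `T` an additive bijection, `q²`-semilinear,
with `B(Tx, y) = B(y, x)^q`. If `v₁,…,v_σ` satisfy the 𝒮-conditions, then the `n` vectors
`T^{h−p_k} v_k` (`1 ≤ k ≤ σ`, `0 ≤ h ≤ 2p_k−2`) form a `𝕜`-basis of `V`. -/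
theorem S_conditions_family_is_basis_frobenius
    (prime q e : ℕ) [Fact (Nat.Prime prime)] (he : 1 ≤ e) (hq : q = prime ^ e)
    (𝕜 : Type*) [Field 𝕜] [IsAlgClosed 𝕜] [CharP 𝕜 prime]
    (V : Type*) [AddCommGroup V] [Module 𝕜 V] [FiniteDimensional 𝕜 V]
    (σ n : ℕ) (p : ℕ → ℕ)
    (hσ : 1 ≤ σ)
    (hp1 : ∀ r, 1 ≤ r → r ≤ σ → 1 ≤ p r)
    (hmono : ∀ r, 1 ≤ r → r < σ → p (r + 1) ≤ p r)
    (hn : n = ∑ r ∈ Finset.Icc 1 σ, (2 * p r - 1))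
    (hdimV : finrank 𝕜 V = n)
    (B : V → V → 𝕜)
    (hBaddl : ∀ x x' y, B (x + x') y = B x y + B x' y)
    (hBaddr : ∀ x y y', B x (y + y') = B x y + B x y')
    (hBsmull : ∀ (l : 𝕜) x y, B (l • x) y = l * B x y)
    (hBsmulr : ∀ (l : 𝕜) x y, B x (l • y) = l ^ q * B x y)
    (hBl : ∀ x, (∀ y, B x y = 0) → x = 0)
    (hBr : ∀ y, (∀ x, B x y = 0) → y = 0)
    (T : AddAut V)
    (hTsmul : ∀ (l : 𝕜) (x : V), T (l • x) = (l ^ (q ^ 2)) • T x)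
    (hT : ∀ x y, B (T x) y = (B y x) ^ q)
    (v : ℕ → V)
    (hS1 : ∀ r ∈ Finset.Icc 1 σ, ∀ t ∈ Finset.Icc 1 σ, t < r →
      ∀ m : ℤ, -(p t : ℤ) ≤ m → m ≤ (p t : ℤ) - 2 → B (v r) ((m • T) (v t)) = 0)
    (hS2 : ∀ r ∈ Finset.Icc 1 σ, ∀ m : ℤ, -(p r : ℤ) + 1 ≤ m → m ≤ (p r : ℤ) - 2 →
      B (v r) ((m • T) (v r)) = 0)
    (hS3 : ∀ r ∈ Finset.Icc 1 σ, B (v r) ((((p r : ℤ) - 1) • T) (v r)) ≠ 0) :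
    LinearIndependent 𝕜
      (fun kh : Σ k : Fin σ, Fin (2 * p (k.1 + 1) - 1) =>
        (((kh.2 : ℤ) - (p (kh.1.1 + 1) : ℤ)) • T) (v (kh.1.1 + 1))) ∧
    Submodule.span 𝕜
      (Set.range (fun kh : Σ k : Fin σ, Fin (2 * p (k.1 + 1) - 1) =>
        (((kh.2 : ℤ) - (p (kh.1.1 + 1) : ℤ)) • T) (v (kh.1.1 + 1)))) = ⊤ :=
  S_conditions_family_is_basis_frobenius_general prime q e hq 𝕜 V σ n p hmono hn hdimV B hBaddl
    hBsmull T hT v hS1 hS2 hS3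
end
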